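/- arXiv:1906.06126 — 9 statements merged into one kernel-verified Lean document; each statement's English description precedes it below -/
import Mathlib

section
/- Under the fugacity-z self-avoiding walk measure on K_n, the random variable n − 1 − L_n has the distribution of a Poisson random variable of rate ν = n/z conditioned to be less than n; equivalently, for all integers 0 ≤ k ≤ n−1, P_{n,z}(L_n = n−1−k) = e^{-ν} ν^k / (k! · Q(n,ν)). -/
open Filter Finset Real

/-- Number of `k`-step SAWs weight: `(z/n)^k` times the number of walks. -/
noncomputable def sawWeight (n : ℕ) (z : ℝ) (k : ℕ) : ℝ :=
  (z / n) ^ k * ((n - 1).descFactorial k)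

/-- Partition function of the variable-length SAW model on `K_n`. -/
noncomputable def sawZ (n : ℕ) (z : ℝ) : ℝ := ∑ k ∈ Finset.range n, sawWeight n z k

/-- Probability that the walk length equals `k`. -/
noncomputable def sawProb (n : ℕ) (z : ℝ) (k : ℕ) : ℝ := sawWeight n z k / sawZ n z

/-- Mean walk length. -/
noncomputable def sawMean (n : ℕ) (z : ℝ) : ℝ := ∑ k ∈ Finset.range n, (k : ℝ) * sawProb n z k

/-- Variance of the walk length. -/
noncomputable def sawVar (n : ℕ) (z : ℝ) : ℝ :=
  (∑ k ∈ Finset.range n, (k : ℝ) ^ 2 * sawProb n z k) - (sawMean n z) ^ 2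

/-- Tail distribution `P(L_n > x)` for real `x`. -/
noncomputable def sawTail (n : ℕ) (z : ℝ) (x : ℝ) : ℝ :=
  ∑ k ∈ Finset.range n, if x < (k : ℝ) then sawProb n z k else 0

/-- Regularised incomplete gamma function at integer first argument,
    `Q(n, ν) = e^{-ν} ∑_{j<n} ν^j/j!`. -/
noncomputable def Qreg (n : ℕ) (ν : ℝ) : ℝ :=
  Real.exp (-ν) * ∑ j ∈ Finset.range n, ν ^ j / (Nat.factorial j)

/-- `H_n(ν) = Γ(n) Q(n,ν) / (ν^n e^{-ν})`. -/
noncomputable def Hfun (n : ℕ) (ν : ℝ) : ℝ :=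
  Real.Gamma n * Qreg n ν / (ν ^ n * Real.exp (-ν))

/-- Standard normal density. -/
noncomputable def normpdf (x : ℝ) : ℝ := Real.exp (-x ^ 2 / 2) / Real.sqrt (2 * Real.pi)

/-- Standard normal tail distribution `Φ̄`. -/
noncomputable def normTail (x : ℝ) : ℝ := ∫ t in Set.Ioi x, normpdf t

/-- `η(λ) = sgn(λ-1) √(2(λ-1-log λ))`. -/
noncomputable def etaF (l : ℝ) : ℝ := Real.sign (l - 1) * Real.sqrt (2 * (l - 1 - Real.log l))

/-- `Γ*(n) = √(n/(2π)) e^n n^{-n} Γ(n)`. -/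
noncomputable def gammaStar (n : ℕ) : ℝ :=
  Real.sqrt (n / (2 * Real.pi)) * Real.exp n * ((n : ℝ) ^ n)⁻¹ * Real.Gamma n

/-- The operator `(ν d/dν)^l`. -/
noncomputable def thetaOp : ℕ → (ℝ → ℝ) → (ℝ → ℝ)
  | 0, f => f
  | (l + 1), f => fun ν => ν * deriv (thetaOp l f) ν

/-!
Reflecting the length, `k ↦ n - 1 - k`, turns the weight `(z/n)^k (n-1)!/(n-1-k)!` into
`(z/n)^(n-1) (n-1)! · ν^k/k!`: up to a common factor, the weights of `n - 1 - L_n` are the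
Poisson(ν) weights restricted to `{0, …, n-1}`, whose total is `e^ν Q(n, ν)`.
-/

open Nat in
theorem pow_sub_mul_descFactorial_sub {K : Type*} [Field K] [CharZero K] {a : K} (ha : a ≠ 0)
    {m j : ℕ} (hj : j ≤ m) :
    a ^ (m - j) * (m.descFactorial (m - j) : K) = a ^ m * m ! * (a⁻¹ ^ j / j !) := by
  have hfact : (j ! : K) * m.descFactorial (m - j) = m ! := by
    have h := Nat.factorial_mul_descFactorial (Nat.sub_le m j)
    rw [Nat.sub_sub_self hj] at h
    exact_mod_cast h
  have hpow : a ^ m = a ^ (m - j) * a ^ j := by rw [← pow_add, Nat.sub_add_cancel hj]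
  have hj0 : (j ! : K) ≠ 0 := Nat.cast_ne_zero.2 j.factorial_ne_zero
  rw [hpow, ← hfact, inv_pow]
  field_simp

open Nat in
theorem sawWeight_reflect (n : ℕ) (hn : n ≠ 0) {z : ℝ} (hz : z ≠ 0) {j : ℕ}
    (hj : j ≤ n - 1) :
    sawWeight n z (n - 1 - j) = (z / n) ^ (n - 1) * (n - 1)! * ((n / z) ^ j / j !) := by
  rw [sawWeight, pow_sub_mul_descFactorial_sub (by positivity) hj, inv_div]

open Nat in
theorem sawZ_eq_mul_Qreg (n : ℕ) (hn : n ≠ 0) {z : ℝ} (hz : z ≠ 0) :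
    sawZ n z = (z / n) ^ (n - 1) * (n - 1)! * (Real.exp (n / z) * Qreg n (n / z)) := by
  rw [Qreg, ← mul_assoc (Real.exp _), ← Real.exp_add, add_neg_cancel, Real.exp_zero, one_mul,
    mul_sum, sawZ, ← sum_range_reflect]
  refine sum_congr rfl fun j hj => sawWeight_reflect n hn hz ?_
  have := mem_range.mp hj
  omega

theorem saw_length_poisson (n : ℕ) (hn : 1 ≤ n) (z : ℝ) (hz : 0 < z)
    (k : ℕ) (hk : k ≤ n - 1) :
    sawProb n z (n - 1 - k)
      = Real.exp (-(n / z)) * (n / z) ^ k / ((Nat.factorial k) * Qreg n (n / z)) := by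
  have hn0 : n ≠ 0 := by omega
  have hC : (z / n) ^ (n - 1) * ((n - 1).factorial : ℝ) ≠ 0 := by positivity
  rw [sawProb, sawWeight_reflect n hn0 hz.ne' hk, sawZ_eq_mul_Qreg n hn0 hz.ne', Real.exp_neg]
  field_simp
end

section
/- For the self-avoiding walk measure on K_n with fugacity z and ν = n/z, for every real x ≥ 0 with x ≤ n−1, the tail distribution satisfies P_{n,z}(L_n > x) = Q(n − ⌊x⌋ − 1, ν)/Q(n, ν). -/
open Filter Finset Real

lemma saw_key (n : ℕ) (hn : 1 ≤ n) (z : ℝ) (hz : 0 < z) :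
    ∀ t : ℕ, t ≤ n →
    ∑ k ∈ Finset.Ico (n - t) n, sawWeight n z k
      = ((n - 1).factorial : ℝ) * (z / n) ^ (n - 1)
        * ∑ j ∈ Finset.range t, (n / z) ^ j / (Nat.factorial j) := by
  have hn0 : (0 : ℝ) < n := by exact_mod_cast hn
  have hzn : (0 : ℝ) < z / n := div_pos hz hn0
  intro t
  induction t with
  | zero => simp
  | succ t ih =>
    intro ht
    have ht' : t ≤ n := Nat.le_of_succ_le ht
    have hlt : n - (t + 1) < n := by omega
    rw [Finset.sum_eq_sum_Ico_succ_bot hlt]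
    have hb : n - (t + 1) + 1 = n - t := by omega
    rw [hb, ih ht', Finset.sum_range_succ]
    have harg : n - (t + 1) = n - 1 - t := by omega
    have hdf : (Nat.factorial t : ℝ) * ((n - 1).descFactorial (n - 1 - t) : ℝ)
        = ((n - 1).factorial : ℝ) := by
      have h1 : t ≤ n - 1 := by omega
      have := Nat.factorial_mul_descFactorial (n := n - 1) (k := n - 1 - t)
        (by omega)
      have h2 : n - 1 - (n - 1 - t) = t := by omega
      rw [h2] at this
      exact_mod_cast this
    have hpow : (z / n) ^ (n - 1 - t) = (z / n) ^ (n - 1) * (n / z) ^ t := by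
      have h1 : (z / n) ^ (n - 1) = (z / n) ^ (n - 1 - t) * (z / n) ^ t := by
        rw [← pow_add]; congr 1; omega
      rw [h1, mul_assoc, ← mul_pow]
      have : z / n * (n / z) = 1 := by field_simp
      rw [this, one_pow, mul_one]
    have hfac : (Nat.factorial t : ℝ) ≠ 0 := by positivity
    have hd : ((n - 1).descFactorial (n - 1 - t) : ℝ)
        = ((n - 1).factorial : ℝ) / (Nat.factorial t) := by
      rw [eq_div_iff hfac]; linarith [hdf]
    rw [sawWeight, harg, hpow, hd]
    ring

theorem saw_tail_eq (n : ℕ) (hn : 1 ≤ n) (z : ℝ) (hz : 0 < z)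
    (x : ℝ) (hx0 : 0 ≤ x) (hx1 : x ≤ (n : ℝ) - 1) :
    sawTail n z x = Qreg (n - ⌊x⌋₊ - 1) (n / z) / Qreg n (n / z) := by
  have hn0 : (0 : ℝ) < n := by exact_mod_cast hn
  set m := ⌊x⌋₊ with hm
  have hmn : m + 1 ≤ n := by
    have : x < n := by linarith
    have := (Nat.floor_lt hx0).2 this
    omega
  set ν : ℝ := n / z with hν
  have hν0 : 0 < ν := div_pos hn0 hz
  set c : ℝ := ((n - 1).factorial : ℝ) * (z / n) ^ (n - 1) with hc
  have hc0 : c ≠ 0 := by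
    have : (0:ℝ) < z / n := div_pos hz hn0
    positivity
  set S : ℕ → ℝ := fun t => ∑ j ∈ Finset.range t, ν ^ j / (Nat.factorial j) with hS
  -- numerator
  have hnum : ∑ k ∈ Finset.range n, (if x < (k : ℝ) then sawWeight n z k else 0)
      = c * S (n - m - 1) := by
    have h1 : ∑ k ∈ Finset.range n, (if x < (k : ℝ) then sawWeight n z k else 0)
        = ∑ k ∈ Finset.Ico (m + 1) n, sawWeight n z k := by
      rw [← Finset.sum_filter]
      congr 1
      ext k
      simp only [Finset.mem_filter, Finset.mem_range, Finset.mem_Ico]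
      constructor
      · rintro ⟨hk, hxk⟩
        exact ⟨(Nat.floor_lt hx0).2 hxk, hk⟩
      · rintro ⟨hk, hk2⟩
        refine ⟨hk2, ?_⟩
        exact (Nat.floor_lt hx0).1 hk
    have h2 : m + 1 = n - (n - m - 1) := by omega
    rw [h1, h2, saw_key n hn z hz (n - m - 1) (by omega)]
  have hden : sawZ n z = c * S n := by
    have : Finset.range n = Finset.Ico (n - n) n := by
      rw [Nat.sub_self, Finset.range_eq_Ico]
    rw [sawZ, this, saw_key n hn z hz n le_rfl]
  have hSn : S n ≠ 0 := by
    have : 0 < S n := by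
      apply Finset.sum_pos
      · intro j _
        positivity
      · exact ⟨0, Finset.mem_range.2 hn⟩
    linarith
  have hZ : sawZ n z ≠ 0 := by rw [hden]; exact mul_ne_zero hc0 hSn
  have hT : sawTail n z x = (c * S (n - m - 1)) / (c * S n) := by
    rw [sawTail, ← hnum, ← hden]
    rw [Finset.sum_div]
    apply Finset.sum_congr rfl
    intro k _
    split
    · rfl
    · simp
  rw [hT, mul_div_mul_left _ _ hc0]
  rw [Qreg, Qreg, mul_div_mul_left _ _ (Real.exp_ne_zero _)]
end

section
/- For the self-avoiding walk measure on K_n with fugacity z and ν = n/z, the mean walk length satisfies E_{n,z}(L_n) = n − 1 − ν + 1/H_n(ν), where H_n(ν) := Γ(n) Q(n,ν)/(ν^n e^{-ν}). -/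
open Filter Finset Real

theorem saw_mean_eq (n : ℕ) (hn : 1 ≤ n) (z : ℝ) (hz : 0 < z) :
    sawMean n z = (n : ℝ) - 1 - (n / z) + 1 / Hfun n (n / z) := by
  have hnn : 0 < n := hn
  have hn0 : (0:ℝ) < n := Nat.cast_pos.mpr hnn
  set ν : ℝ := (n : ℝ) / z with hνdef
  have hνpos : 0 < ν := div_pos hn0 hz
  have hzn : (z / (n:ℝ)) = ν⁻¹ := by rw [hνdef, inv_div]
  have hmul : ν * (z / (n:ℝ)) = 1 := by
    rw [hzn]; field_simp
  -- weights are nonneg, w 0 = 1, w n = 0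
  have hw0 : sawWeight n z 0 = 1 := by simp [sawWeight]
  have hwn : sawWeight n z n = 0 := by
    simp [sawWeight, Nat.descFactorial_of_lt (Nat.sub_lt hnn one_pos)]
  have hwnonneg : ∀ k, 0 ≤ sawWeight n z k := by
    intro k; unfold sawWeight; positivity
  have hZpos : 0 < sawZ n z := by
    refine Finset.sum_pos' (fun k _ => hwnonneg k) ⟨0, Finset.mem_range.2 hnn, by rw [hw0]; norm_num⟩
  -- step identity
  have hstep : ∀ k, ((n:ℝ) - 1 - k) * sawWeight n z k = ν * sawWeight n z (k+1) := by
    intro k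
    have hd : (n-1).descFactorial (k+1) = (n-1-k) * (n-1).descFactorial k :=
      Nat.descFactorial_succ _ _
    have hR : ν * sawWeight n z (k+1)
        = ((n-1-k : ℕ) : ℝ) * sawWeight n z k := by
      simp only [sawWeight, hd, pow_succ]
      push_cast
      calc ν * ((z/(n:ℝ))^k * (z/(n:ℝ)) * (((n-1-k:ℕ):ℝ) * ((n-1).descFactorial k : ℝ)))
          = (ν * (z/(n:ℝ))) * (((n-1-k:ℕ):ℝ) * ((z/(n:ℝ))^k * ((n-1).descFactorial k : ℝ))) := by ring
        _ = ((n-1-k:ℕ):ℝ) * ((z/(n:ℝ))^k * ((n-1).descFactorial k : ℝ)) := by rw [hmul, one_mul]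
    rw [hR]
    by_cases hk : k ≤ n - 1
    · congr 1
      have : ((n-1-k : ℕ) : ℝ) = ((n-1:ℕ):ℝ) - k := by
        push_cast [Nat.cast_sub hk]; ring
      rw [this]
      push_cast [Nat.cast_sub hn]
      ring
    · have : sawWeight n z k = 0 := by
        simp [sawWeight, Nat.descFactorial_of_lt (lt_of_not_ge hk)]
      rw [this]; ring
  -- sum identity
  have hsum1 : ∑ k ∈ Finset.range n, ((n:ℝ) - 1 - k) * sawWeight n z k
      = ν * (sawZ n z - 1) := by
    have h1 : ∑ k ∈ Finset.range n, ((n:ℝ) - 1 - k) * sawWeight n z k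
        = ν * ∑ k ∈ Finset.range n, sawWeight n z (k+1) := by
      rw [Finset.mul_sum]; exact Finset.sum_congr rfl fun k _ => hstep k
    have h2 : ∑ k ∈ Finset.range n, sawWeight n z (k+1)
        = sawZ n z - 1 := by
      have := Finset.sum_range_succ' (fun k => sawWeight n z k) n
      have h3 : ∑ k ∈ Finset.range (n+1), sawWeight n z k = sawZ n z := by
        rw [Finset.sum_range_succ, hwn, add_zero]; rfl
      rw [h3, hw0] at this
      linarith
    rw [h1, h2]
  have hM : ∑ k ∈ Finset.range n, (k:ℝ) * sawWeight n z k
      = ((n:ℝ) - 1 - ν) * sawZ n z + ν := by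
    have hexp : ∑ k ∈ Finset.range n, ((n:ℝ) - 1 - k) * sawWeight n z k
        = ((n:ℝ) - 1) * sawZ n z - ∑ k ∈ Finset.range n, (k:ℝ) * sawWeight n z k := by
      rw [sawZ, Finset.mul_sum, ← Finset.sum_sub_distrib]
      exact Finset.sum_congr rfl fun k _ => by ring
    rw [hexp] at hsum1
    linarith
  -- Hfun = Z / ν
  have hH : Hfun n ν = sawZ n z / ν := by
    have hsumQ : ((n-1).factorial : ℝ) * ∑ j ∈ Finset.range n, ν ^ j / (Nat.factorial j)
        = ν ^ (n-1) * sawZ n z := by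
      have hrefl : sawZ n z = ∑ j ∈ Finset.range n, sawWeight n z (n - 1 - j) :=
        (Finset.sum_range_reflect (fun k => sawWeight n z k) n).symm
      rw [hrefl, Finset.mul_sum, Finset.mul_sum]
      refine Finset.sum_congr rfl fun j hj => ?_
      have hjn : j ≤ n - 1 := Nat.le_sub_one_of_lt (Finset.mem_range.1 hj)
      have hfac : (Nat.factorial j : ℝ) * ((n-1).descFactorial (n-1-j) : ℝ)
          = ((n-1).factorial : ℝ) := by
        have := Nat.factorial_mul_descFactorial (Nat.sub_le (n-1) j)
        rw [Nat.sub_sub_self hjn] at this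
        exact_mod_cast this
      have hjfac : (0:ℝ) < (Nat.factorial j : ℝ) := by exact_mod_cast j.factorial_pos
      have hpow : (z / (n:ℝ)) ^ (n-1-j) = (ν ^ (n-1-j))⁻¹ := by
        rw [hzn, inv_pow]
      have hsplit : ν ^ (n-1) = ν ^ j * ν ^ (n-1-j) := by
        rw [← pow_add, Nat.add_sub_cancel' hjn]
      rw [sawWeight, hpow, hsplit]
      have hνn : (ν ^ (n-1-j)) ≠ 0 := by positivity
      have hre : ν ^ j * ν ^ (n-1-j) * ((ν ^ (n-1-j))⁻¹ * ((n-1).descFactorial (n-1-j) : ℝ))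
          = ν ^ j * ((n-1).descFactorial (n-1-j) : ℝ) := by
        field_simp
      rw [hre, ← hfac]
      field_simp
    have hΓ : Real.Gamma n = ((n-1).factorial : ℝ) := by
      have hc : ((n:ℕ):ℝ) = (((n-1)+1 : ℕ):ℝ) := by rw [Nat.sub_add_cancel hn]
      rw [hc]
      exact_mod_cast Real.Gamma_nat_eq_factorial (n-1)
    have hepos : Real.exp (-ν) ≠ 0 := Real.exp_ne_zero _
    have hνn : ν ^ n ≠ 0 := by positivity
    rw [Hfun, Qreg, hΓ]
    rw [div_eq_div_iff (by positivity) (ne_of_gt hνpos)]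
    have hpow2 : ν ^ n = ν ^ (n-1) * ν := by
      rw [← pow_succ, Nat.sub_add_cancel hn]
    calc ((n-1).factorial : ℝ) * (Real.exp (-ν) * ∑ j ∈ Finset.range n, ν ^ j / (Nat.factorial j)) * ν
        = (((n-1).factorial : ℝ) * ∑ j ∈ Finset.range n, ν ^ j / (Nat.factorial j)) * ν * Real.exp (-ν) := by ring
      _ = (ν ^ (n-1) * sawZ n z) * ν * Real.exp (-ν) := by rw [hsumQ]
      _ = sawZ n z * (ν ^ n * Real.exp (-ν)) := by rw [hpow2]; ring
  -- conclude
  have hmean : sawMean n z = (((n:ℝ) - 1 - ν) * sawZ n z + ν) / sawZ n z := by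
    rw [sawMean, ← hM, Finset.sum_div]
    exact Finset.sum_congr rfl fun k _ => by rw [sawProb]; ring
  rw [hmean, hH, one_div, inv_div]
  field_simp
end

section
/- For the self-avoiding walk measure on K_n with fugacity z and ν = n/z, the variance of the walk length satisfies var_{n,z}(L_n) = ν + (ν − n)/H_n(ν) − 1/H_n(ν)², where H_n(ν) := Γ(n) Q(n,ν)/(ν^n e^{-ν}). -/
open Filter Finset Real

open Nat

/-
With `n = m + 1` and `ν = n / z`, the weight `w_k` of length `k` is `m!/(m-k)! · ν^{-k}`, so the length
law is a reflected truncated Poisson law. Its partition function `A_m(ν) = ∑_{k ≤ m} m!/(m-k)! ν^{-k}`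
satisfies `A_{m+1} = 1 + (m+1)/ν · A_m`, and the same peeling of the first factor of the falling
factorial gives recursions for the first two moments; induction on `m` turns them into
`∑ k w_k = (m - ν) A + ν` and `∑ k² w_k = ((m - ν)² + ν) A + ν (m - 1 - ν)`. Since `H_n(ν) = A_m(ν)/ν`,
the variance formula is then an identity of rational functions of `ν` and `A`.
-/

section DescMoment

variable {K : Type*} [Field K]

def descMoment (f : ℕ → K) (m : ℕ) (ν : K) : K :=
  ∑ k ∈ range (m + 1), f k * (m.descFactorial k / ν ^ k)

theorem descMoment_add (f g : ℕ → K) (m : ℕ) (ν : K) :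
    descMoment (fun k => f k + g k) m ν = descMoment f m ν + descMoment g m ν := by
  simp only [descMoment, add_mul, sum_add_distrib]

theorem descMoment_const_mul (c : K) (f : ℕ → K) (m : ℕ) (ν : K) :
    descMoment (fun k => c * f k) m ν = c * descMoment f m ν := by
  simp only [descMoment, mul_assoc, mul_sum]

theorem descMoment_succ (f : ℕ → K) (m : ℕ) (ν : K) :
    descMoment f (m + 1) ν = f 0 + (m + 1) / ν * descMoment (fun k => f (k + 1)) m ν := by
  rw [descMoment, sum_range_succ', descMoment, mul_sum, add_comm]
  congr 1
  · simp
  · refine sum_congr rfl fun k _ => ?_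
    rw [Nat.succ_descFactorial_succ]
    push_cast
    ring

theorem descMoment_one_succ (m : ℕ) (ν : K) :
    descMoment 1 (m + 1) ν = 1 + (m + 1) / ν * descMoment 1 m ν :=
  descMoment_succ 1 m ν

theorem descMoment_natCast_eq (m : ℕ) {ν : K} (hν : ν ≠ 0) :
    descMoment (fun k => (k : K)) m ν = (m - ν) * descMoment 1 m ν + ν := by
  induction m with
  | zero => simp [descMoment]
  | succ m ih =>
    have hshift : descMoment (fun k => ((k + 1 : ℕ) : K)) m ν
        = descMoment (fun k => (k : K)) m ν + descMoment 1 m ν := by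
      simpa using descMoment_add (fun k => (k : K)) 1 m ν
    rw [descMoment_succ, hshift, ih, descMoment_one_succ]
    field_simp
    push_cast
    ring

theorem descMoment_natCast_sq_eq (m : ℕ) {ν : K} (hν : ν ≠ 0) :
    descMoment (fun k => (k : K) ^ 2) m ν
      = ((m - ν) ^ 2 + ν) * descMoment 1 m ν + ν * (m - 1 - ν) := by
  induction m with
  | zero => simp [descMoment]; ring
  | succ m ih =>
    have hshift : descMoment (fun k => ((k + 1 : ℕ) : K) ^ 2) m ν
        = descMoment (fun k => (k : K) ^ 2) m ν + 2 * descMoment (fun k => (k : K)) m ν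
          + descMoment 1 m ν := by
      rw [← descMoment_const_mul, ← descMoment_add, ← descMoment_add]
      congr 1
      ext k
      simp only [Pi.one_apply]
      push_cast
      ring
    rw [descMoment_succ, hshift, ih, descMoment_natCast_eq m hν, descMoment_one_succ]
    field_simp
    push_cast
    ring

theorem descMoment_one_eq [CharZero K] (m : ℕ) {ν : K} (hν : ν ≠ 0) :
    descMoment 1 m ν = m ! / ν ^ m * ∑ j ∈ range (m + 1), ν ^ j / j ! := by
  induction m with
  | zero => simp [descMoment]
  | succ m ih =>
    have hfact : (m ! : K) ≠ 0 := by exact_mod_cast m.factorial_ne_zero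
    rw [descMoment_one_succ, ih, sum_range_succ (n := m + 1), Nat.factorial_succ]
    push_cast
    field_simp
    ring

end DescMoment

theorem descMoment_one_pos {K : Type*} [Field K] [LinearOrder K] [IsStrictOrderedRing K]
    (m : ℕ) {ν : K} (hν : 0 < ν) : 0 < descMoment 1 m ν :=
  sum_pos' (fun k _ => mul_nonneg zero_le_one (by positivity)) ⟨0, mem_range.2 m.succ_pos, by simp⟩

theorem sum_mul_sawProb (f : ℕ → ℝ) (m : ℕ) (z : ℝ) :
    ∑ k ∈ range (m + 1), f k * sawProb (m + 1) z k
      = descMoment f m ((m + 1 : ℕ) / z) / descMoment 1 m ((m + 1 : ℕ) / z) := by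
  have hweight (k : ℕ) : sawWeight (m + 1) z k = m.descFactorial k / ((m + 1 : ℕ) / z) ^ k := by
    rw [sawWeight, Nat.add_sub_cancel, ← inv_div, inv_pow, inv_mul_eq_div]
  have hZ : sawZ (m + 1) z = descMoment 1 m ((m + 1 : ℕ) / z) := by
    simp only [sawZ, descMoment, hweight, Pi.one_apply, one_mul]
  simp only [sawProb, hweight, hZ, descMoment, ← mul_div_assoc, sum_div]

theorem Hfun_succ_eq (m : ℕ) {ν : ℝ} (hν : ν ≠ 0) : Hfun (m + 1) ν = descMoment 1 m ν / ν := by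
  rw [Hfun, Qreg, descMoment_one_eq m hν, Nat.cast_succ, Gamma_nat_eq_factorial]
  field_simp
  ring

theorem saw_var_eq (n : ℕ) (hn : 1 ≤ n) (z : ℝ) (hz : 0 < z) :
    sawVar n z = (n / z) + ((n / z) - n) / Hfun n (n / z) - 1 / (Hfun n (n / z)) ^ 2 := by
  obtain ⟨m, rfl⟩ := Nat.exists_eq_add_of_le' hn
  set ν : ℝ := ((m + 1 : ℕ) : ℝ) / z
  have hν : 0 < ν := by positivity
  have hA := descMoment_one_pos m hν
  have hsecond : ∑ k ∈ range (m + 1), (k : ℝ) ^ 2 * sawProb (m + 1) z k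
      = descMoment (fun k => (k : ℝ) ^ 2) m ν / descMoment 1 m ν :=
    sum_mul_sawProb _ m z
  have hmean : sawMean (m + 1) z = descMoment (fun k => (k : ℝ)) m ν / descMoment 1 m ν :=
    sum_mul_sawProb _ m z
  rw [sawVar, hsecond, hmean, Hfun_succ_eq m hν.ne', descMoment_natCast_eq m hν.ne',
    descMoment_natCast_sq_eq m hν.ne']
  field_simp
  push_cast
  ring
end

section
/- For every m ∈ ℕ, the m-th moment of the walk length under the self-avoiding walk measure on K_n with fugacity z and ν = n/z satisfies E_{n,z}(L_n^m) = ∑_{l=0}^m (−1)^l C(m,l) (n−1)^{m−l} · (e^{-ν}/Q(n,ν)) · (ν d/dν)^l [e^ν Q(n,ν)]. -/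
open Filter Finset Real

/-!
Index walks by their deficit `j = n - 1 - L` from the maximal length. Then the weight of length
`n - 1 - j` is proportional to `νʲ / j!` with `ν = n / z`, so `L = n - 1 - J` where `J` is a Poisson(ν)
variable conditioned on `J < n`, whose normalising sum `∑_{j<n} νʲ/j!` is `e^ν Q(n, ν)`. Expanding
`(n - 1 - J)ᵐ` binomially leaves the moments `E[Jˡ]`, and `(ν d/dν)ˡ` applied to `∑_{j<n} νʲ/j!`
produces `∑_{j<n} jˡ νʲ/j!`.
-/

open Nat

lemma exp_mul_Qreg (n : ℕ) (t : ℝ) : exp t * Qreg n t = ∑ j ∈ range n, t ^ j / j ! := by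
  rw [Qreg, ← mul_assoc, ← exp_add, add_neg_cancel, exp_zero, one_mul]

lemma exp_neg_div_Qreg (n : ℕ) (t : ℝ) :
    exp (-t) / Qreg n t = (∑ j ∈ range n, t ^ j / j !)⁻¹ := by
  rw [Qreg, div_mul_eq_div_div, div_self (exp_ne_zero _), one_div]

lemma thetaOp_sum_mul_pow (s : Finset ℕ) (c : ℕ → ℝ) (l : ℕ) :
    thetaOp l (fun t => ∑ j ∈ s, c j * t ^ j) = fun t => ∑ j ∈ s, (j : ℝ) ^ l * c j * t ^ j := by
  induction l with
  | zero => simp [thetaOp]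
  | succ l ih =>
    funext t
    have hderiv : HasDerivAt (fun t => ∑ j ∈ s, (j : ℝ) ^ l * c j * t ^ j)
        (∑ j ∈ s, (j : ℝ) ^ l * c j * (j * t ^ (j - 1))) t :=
      HasDerivAt.fun_sum fun j _ => (hasDerivAt_pow j t).const_mul _
    rw [thetaOp, ih]
    dsimp only
    rw [hderiv.deriv, mul_sum]
    refine sum_congr rfl fun j _ => ?_
    rcases j with _ | j
    · simp
    · rw [Nat.add_sub_cancel, pow_succ _ l, pow_succ t j]
      ring

lemma thetaOp_exp_mul_Qreg (n l : ℕ) (t : ℝ) :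
    thetaOp l (fun t => exp t * Qreg n t) t = ∑ j ∈ range n, (j : ℝ) ^ l * (t ^ j / j !) := by
  have hpoly : (fun t => exp t * Qreg n t) = fun t => ∑ j ∈ range n, (j ! : ℝ)⁻¹ * t ^ j := by
    funext t
    simp only [exp_mul_Qreg, div_eq_inv_mul]
  rw [hpoly, thetaOp_sum_mul_pow]
  simp only [div_eq_inv_mul, mul_assoc]

lemma sawWeight_sub_one_sub {n j : ℕ} {z : ℝ} (hz : z ≠ 0) (hj : j < n) :
    sawWeight n z (n - 1 - j) = (z / n) ^ (n - 1) * (n - 1)! * ((n / z) ^ j / j !) := by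
  have hn : (n : ℝ) ≠ 0 := by exact_mod_cast (zero_lt_of_lt hj).ne'
  have hinv : (z / n) ^ j * (n / z) ^ j = 1 := by
    rw [← mul_pow, div_mul_div_cancel₀ hn, div_self hz, one_pow]
  have hpow : (z / n) ^ (n - 1) = (z / n) ^ (n - 1 - j) * (z / n) ^ j := by
    rw [← pow_add, Nat.sub_add_cancel (by omega)]
  have hfac : (j ! : ℝ) * (n - 1).descFactorial (n - 1 - j) = (n - 1)! := by
    have h := factorial_mul_descFactorial (show n - 1 - j ≤ n - 1 by omega)
    rw [Nat.sub_sub_self (by omega)] at h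
    exact_mod_cast h
  rw [sawWeight, hpow, ← hfac]
  field_simp
  exact hinv.symm

lemma sum_mul_sawWeight {n : ℕ} {z : ℝ} (hz : z ≠ 0) (f : ℕ → ℝ) :
    ∑ k ∈ range n, f k * sawWeight n z k
      = (z / n) ^ (n - 1) * (n - 1)! * ∑ j ∈ range n, f (n - 1 - j) * ((n / z) ^ j / j !) := by
  rw [← sum_range_reflect, mul_sum]
  refine sum_congr rfl fun j hj => ?_
  rw [sawWeight_sub_one_sub hz (mem_range.mp hj)]
  ring

lemma sum_pow_mul_sawProb {n : ℕ} {z : ℝ} (hz : z ≠ 0) (m : ℕ) :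
    ∑ k ∈ range n, (k : ℝ) ^ m * sawProb n z k
      = (∑ j ∈ range n, ((n : ℝ) - 1 - j) ^ m * ((n / z) ^ j / j !))
          / ∑ j ∈ range n, (n / z) ^ j / j ! := by
  rcases n.eq_zero_or_pos with rfl | hn
  · simp
  have hc : (z / n) ^ (n - 1) * ((n - 1)! : ℝ) ≠ 0 :=
    mul_ne_zero (pow_ne_zero _ (div_ne_zero hz (by positivity))) (by positivity)
  have hcast : ∀ j ∈ range n, ((n - 1 - j : ℕ) : ℝ) ^ m * ((n / z) ^ j / j !)
      = ((n : ℝ) - 1 - j) ^ m * ((n / z) ^ j / j !) := fun j hj => by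
    rw [Nat.cast_sub (by simp at hj; omega), Nat.cast_sub hn, Nat.cast_one]
  have hmoment : ∑ k ∈ range n, (k : ℝ) ^ m * sawProb n z k
      = (∑ k ∈ range n, (k : ℝ) ^ m * sawWeight n z k) / sawZ n z := by
    simp only [sawProb, mul_div_assoc', sum_div]
  have hZ : sawZ n z = (z / n) ^ (n - 1) * (n - 1)! * ∑ j ∈ range n, (n / z) ^ j / j ! := by
    simpa [sawZ] using sum_mul_sawWeight hz (fun _ => 1)
  rw [hmoment, hZ, sum_mul_sawWeight hz, sum_congr rfl hcast, mul_div_mul_left _ _ hc]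

theorem saw_moment_eq_general (n : ℕ) (z : ℝ) (hz : 0 < z) (m : ℕ) :
    (∑ k ∈ Finset.range n, (k : ℝ) ^ m * sawProb n z k)
      = ∑ l ∈ Finset.range (m + 1),
          (-1 : ℝ) ^ l * (m.choose l) * ((n : ℝ) - 1) ^ (m - l)
            * (Real.exp (-(n / z)) / Qreg n (n / z))
            * thetaOp l (fun t => Real.exp t * Qreg n t) (n / z) := by
  simp only [sum_pow_mul_sawProb hz.ne', exp_neg_div_Qreg, thetaOp_exp_mul_Qreg, mul_sum,
    div_eq_inv_mul (∑ j ∈ range n, _)]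
  rw [sum_comm]
  refine sum_congr rfl fun j _ => ?_
  have hbinom : ((n : ℝ) - 1 - j) ^ m
      = ∑ l ∈ range (m + 1), (-(j : ℝ)) ^ l * ((n : ℝ) - 1) ^ (m - l) * m.choose l := by
    rw [← add_pow]; ring
  rw [hbinom, sum_mul, mul_sum]
  refine sum_congr rfl fun l _ => ?_
  rw [neg_pow]
  ring

theorem saw_moment_eq (n : ℕ) (hn : 1 ≤ n) (z : ℝ) (hz : 0 < z) (m : ℕ) :
    (∑ k ∈ Finset.range n, (k : ℝ) ^ m * sawProb n z k)
      = ∑ l ∈ Finset.range (m + 1),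
          (-1 : ℝ) ^ l * (m.choose l) * ((n : ℝ) - 1) ^ (m - l)
            * (Real.exp (-(n / z)) / Qreg n (n / z))
            * thetaOp l (fun t => Real.exp t * Qreg n t) (n / z) :=
  saw_moment_eq_general n z hz m
end

section
/- Fix α ∈ (−1,0) and let z_n satisfy 1/z_n = 1 + α. Then the mean walk length of the self-avoiding walk on K_n at fugacity z_n satisfies E_{n,z_n}(L_n) ~ |α| n as n → ∞. -/
open Filter Finset Real Asymptotics

/-- Auxiliary truncated exponential sum `∑_{j<m} (c n)^j / j!`. -/
noncomputable def auxT (c : ℝ) (n m : ℕ) : ℝ :=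
  ∑ j ∈ Finset.range m, (c * n) ^ j / (Nat.factorial j)

lemma auxT_term_le {c : ℝ} (hc : 0 ≤ c) (n : ℕ) {j m : ℕ} (hj : j < m) :
    (c * n) ^ j / (Nat.factorial j) ≤ auxT c n m := by
  have hnn : ∀ i ∈ Finset.range m, (0:ℝ) ≤ (c * n) ^ i / (Nat.factorial i) := by
    intro i _
    positivity
  exact Finset.single_le_sum hnn (Finset.mem_range.2 hj)

lemma one_le_auxT {c : ℝ} (hc : 0 ≤ c) (n : ℕ) {m : ℕ} (hm : 1 ≤ m) :
    (1:ℝ) ≤ auxT c n m := by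
  have := auxT_term_le hc n hm
  simpa using this

lemma descFactorial_cast {n j : ℕ} (hj : j ≤ n) :
    ((n.descFactorial (n - j) : ℝ)) = (Nat.factorial n : ℝ) / (Nat.factorial j : ℝ) := by
  have h : n - j ≤ n := Nat.sub_le _ _
  have key := Nat.factorial_mul_descFactorial h
  have hnj : n - (n - j) = j := by omega
  rw [hnj] at key
  have : ((Nat.factorial j : ℝ)) * (n.descFactorial (n - j) : ℝ) = (Nat.factorial n : ℝ) := by
    exact_mod_cast congrArg (Nat.cast (R := ℝ)) key
  field_simp [Nat.factorial_ne_zero] at this ⊢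
  linarith [this]

lemma sawZ_eq {c : ℝ} (hc : 0 < c) {n : ℕ} (hn : 1 ≤ n) :
    sawZ n (1 / c) = ((Nat.factorial (n - 1) : ℝ) / (c * n) ^ (n - 1)) * auxT c n n := by
  have hcn : (0:ℝ) < c * n := by
    have : (0:ℝ) < (n:ℝ) := by exact_mod_cast hn
    positivity
  unfold sawZ sawWeight auxT
  rw [← Finset.sum_range_reflect, Finset.mul_sum]
  refine Finset.sum_congr rfl fun j hj => ?_
  have hjn : j ≤ n - 1 := by
    have := Finset.mem_range.1 hj; omega
  have hdesc := descFactorial_cast (n := n - 1) (j := j) hjn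
  rw [hdesc]
  have hz : (1 / c / (n:ℝ)) = (c * n)⁻¹ := by
    field_simp
  rw [hz]
  have hpow : (c * n) ^ (n - 1) = (c * n) ^ j * (c * n) ^ (n - 1 - j) := by
    rw [← pow_add]
    congr 1
    omega
  rw [inv_pow, hpow]
  have h1 : ((c*n) ^ j) ≠ 0 := by positivity
  have h2 : ((c*n) ^ (n-1-j)) ≠ 0 := by positivity
  have h3 : (Nat.factorial j : ℝ) ≠ 0 := by exact_mod_cast Nat.factorial_ne_zero j
  field_simp

lemma sum_j_mul (ν : ℝ) {n : ℕ} (hn : 1 ≤ n) :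
    ∑ j ∈ Finset.range n, (j : ℝ) * (ν ^ j / (Nat.factorial j))
      = ν * ∑ j ∈ Finset.range (n - 1), ν ^ j / (Nat.factorial j) := by
  obtain ⟨m, rfl⟩ : ∃ m, n = m + 1 := ⟨n - 1, by omega⟩
  rw [Finset.sum_range_succ']
  simp only [Nat.add_sub_cancel, Finset.mul_sum]
  rw [Nat.cast_zero, zero_mul, add_zero]
  refine Finset.sum_congr rfl fun i _ => ?_
  have h3 : (Nat.factorial i : ℝ) ≠ 0 := by exact_mod_cast Nat.factorial_ne_zero i
  have h4 : ((i:ℝ) + 1) ≠ 0 := by positivity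
  rw [Nat.factorial_succ, pow_succ]
  push_cast
  field_simp

lemma sawNum_eq {c : ℝ} (hc : 0 < c) {n : ℕ} (hn : 1 ≤ n) :
    ∑ k ∈ Finset.range n, (k : ℝ) * sawWeight n (1 / c) k
      = ((Nat.factorial (n - 1) : ℝ) / (c * n) ^ (n - 1)) *
        (((n:ℝ) - 1) * auxT c n n - c * n * auxT c n (n - 1)) := by
  have hcn : (0:ℝ) < c * n := by
    have : (0:ℝ) < (n:ℝ) := by exact_mod_cast hn
    positivity
  unfold sawWeight
  rw [← Finset.sum_range_reflect]
  have step : ∀ j ∈ Finset.range n,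
      ((n - 1 - j : ℕ) : ℝ) * ((1 / c / (n:ℝ)) ^ (n - 1 - j) * ((n-1).descFactorial (n - 1 - j) : ℝ))
        = ((Nat.factorial (n - 1) : ℝ) / (c * n) ^ (n - 1)) *
            ((((n:ℝ) - 1) - j) * ((c * n) ^ j / (Nat.factorial j))) := by
    intro j hj
    have hjn : j ≤ n - 1 := by have := Finset.mem_range.1 hj; omega
    have hdesc := descFactorial_cast (n := n - 1) (j := j) hjn
    rw [hdesc]
    have hz : (1 / c / (n:ℝ)) = (c * n)⁻¹ := by field_simp
    rw [hz]
    have hpow : (c * n) ^ (n - 1) = (c * n) ^ j * (c * n) ^ (n - 1 - j) := by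
      rw [← pow_add]; congr 1; omega
    have hcast : ((n - 1 - j : ℕ) : ℝ) = ((n:ℝ) - 1) - j := by
      rw [Nat.cast_sub hjn, Nat.cast_sub hn, Nat.cast_one]
    rw [inv_pow, hpow, hcast]
    have h1 : ((c*n) ^ j) ≠ 0 := by positivity
    have h2 : ((c*n) ^ (n-1-j)) ≠ 0 := by positivity
    have h3 : (Nat.factorial j : ℝ) ≠ 0 := by exact_mod_cast Nat.factorial_ne_zero j
    field_simp
  rw [Finset.sum_congr rfl step]
  rw [← Finset.mul_sum]
  congr 1
  have expand : ∑ j ∈ Finset.range n, ((((n:ℝ) - 1) - j) * ((c * n) ^ j / (Nat.factorial j)))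
      = ((n:ℝ) - 1) * auxT c n n - ∑ j ∈ Finset.range n, (j:ℝ) * ((c*n) ^ j / (Nat.factorial j)) := by
    unfold auxT
    rw [Finset.mul_sum, ← Finset.sum_sub_distrib]
    refine Finset.sum_congr rfl fun j _ => ?_
    ring
  rw [expand, sum_j_mul (c * n) hn]
  rfl

lemma auxT_split {c : ℝ} (n : ℕ) {m : ℕ} (hm : 1 ≤ m) :
    auxT c n m = auxT c n (m - 1) + (c * n) ^ (m - 1) / (Nat.factorial (m - 1)) := by
  have h : Finset.range m = Finset.range ((m - 1) + 1) := by rw [Nat.sub_add_cancel hm]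
  unfold auxT
  rw [h, Finset.sum_range_succ]

lemma sawMean_eq {c : ℝ} (hc : 0 < c) {n : ℕ} (hn : 1 ≤ n) :
    sawMean n (1 / c) = ((n:ℝ) - 1) - c * n
      + c * n * (((c * n) ^ (n - 1) / (Nat.factorial (n - 1))) / auxT c n n) := by
  have hn0 : (0:ℝ) < (n:ℝ) := by exact_mod_cast hn
  have hcn : (0:ℝ) < c * n := by positivity
  have hT1 : (1:ℝ) ≤ auxT c n n := one_le_auxT hc.le n hn
  have hT0 : (0:ℝ) < auxT c n n := by linarith
  have hC : (0:ℝ) < (Nat.factorial (n - 1) : ℝ) / (c * n) ^ (n - 1) := by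
    have := Nat.factorial_pos (n - 1)
    have h1 : (0:ℝ) < (Nat.factorial (n-1) : ℝ) := by exact_mod_cast this
    positivity
  unfold sawMean sawProb
  have hrw : ∀ k ∈ Finset.range n,
      (k:ℝ) * (sawWeight n (1/c) k / sawZ n (1/c)) = (k:ℝ) * sawWeight n (1/c) k / sawZ n (1/c) := by
    intro k _; ring
  rw [Finset.sum_congr rfl hrw, ← Finset.sum_div, sawNum_eq hc hn, sawZ_eq hc hn]
  have hT' : auxT c n (n - 1) = auxT c n n - (c * n) ^ (n - 1) / (Nat.factorial (n - 1)) := by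
    rw [auxT_split n hn]; ring
  rw [hT']
  have hCne : ((Nat.factorial (n - 1) : ℝ) / (c * n) ^ (n - 1)) ≠ 0 := ne_of_gt hC
  have hTne : auxT c n n ≠ 0 := ne_of_gt hT0
  have hfne : (Nat.factorial (n - 1) : ℝ) ≠ 0 := by
    exact_mod_cast (Nat.factorial_pos (n-1)).ne'
  have hcnpow : ((c * (n:ℝ)) ^ (n - 1)) ≠ 0 := by positivity
  field_simp
  ring

lemma ratio_tendsto {c : ℝ} (hc0 : 0 < c) (hc1 : c < 1) :
    Tendsto (fun n : ℕ => ((c * n) ^ (n - 1) / (Nat.factorial (n - 1))) / auxT c n n)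
      atTop (nhds 0) := by
  rw [Metric.tendsto_atTop]
  intro ε hε
  set d : ℝ := (1 + c) / 2 with hd
  have hdc : c < d := by rw [hd]; linarith
  have hd1 : d < 1 := by rw [hd]; linarith
  have hd0 : 0 < d := by rw [hd]; linarith
  obtain ⟨i, hi⟩ := exists_pow_lt_of_lt_one hε hd1
  refine ⟨max (i + 1) (Nat.ceil (d * i / (d - c)) + 1), fun n hn => ?_⟩
  have hin : i + 1 ≤ n := le_trans (le_max_left _ _) hn
  have hceil : (Nat.ceil (d * i / (d - c)) : ℝ) ≤ n := by
    have : Nat.ceil (d * i / (d - c)) ≤ n := by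
      have := le_trans (le_max_right (i+1) _) hn; omega
    exact_mod_cast this
  have hdi : d * i ≤ (d - c) * n := by
    have h1 : d * i / (d - c) ≤ (n:ℝ) := le_trans (Nat.le_ceil _) hceil
    have h2 : (0:ℝ) < d - c := by linarith
    calc d * i = (d * i / (d - c)) * (d - c) := by field_simp
    _ ≤ (n:ℝ) * (d - c) := by apply mul_le_mul_of_nonneg_right h1 h2.le
    _ = (d - c) * n := by ring
  have hn1 : 1 ≤ n := by omega
  have hn0 : (0:ℝ) < (n:ℝ) := by exact_mod_cast hn1
  have hcn : (0:ℝ) ≤ c * n := by positivity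
  have hT1 : (1:ℝ) ≤ auxT c n n := one_le_auxT hc0.le n hn1
  have hT0 : (0:ℝ) < auxT c n n := by linarith
  -- cast facts
  have hnisub : ((n - i : ℕ) : ℝ) = (n:ℝ) - i := by
    rw [Nat.cast_sub (by omega : i ≤ n)]
  have hcd : c * n ≤ d * ((n - i : ℕ) : ℝ) := by
    rw [hnisub]; nlinarith
  have hile : i ≤ n - 1 := by omega
  -- descFactorial facts
  have hDfac : ((n - 1 - i).factorial : ℝ) * ((n - 1).descFactorial i : ℝ)
      = ((n - 1).factorial : ℝ) := by
    exact_mod_cast congrArg (Nat.cast (R := ℝ)) (Nat.factorial_mul_descFactorial hile)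
  have hDlow : (((n - i : ℕ) : ℝ)) ^ i ≤ ((n - 1).descFactorial i : ℝ) := by
    have h := Nat.pow_sub_le_descFactorial (n - 1) i
    have h2 : n - 1 + 1 - i = n - i := by omega
    rw [h2] at h
    exact_mod_cast h
  have hDpos : (0:ℝ) < ((n - 1).descFactorial i : ℝ) := by
    have : (0:ℝ) < (((n - i : ℕ) : ℝ)) ^ i := by
      have : (1:ℝ) ≤ ((n - i : ℕ) : ℝ) := by exact_mod_cast (by omega : 1 ≤ n - i)
      positivity
    linarith
  have hfpos : ∀ m : ℕ, (0:ℝ) < (Nat.factorial m : ℝ) := fun m => by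
    exact_mod_cast Nat.factorial_pos m
  -- key factorization : t(n-1) = t(n-1-i) * (cn)^i / D
  have hkey : (c * n) ^ (n - 1) / ((n - 1).factorial : ℝ)
      = ((c * n) ^ (n - 1 - i) / ((n - 1 - i).factorial : ℝ))
        * ((c * n) ^ i / ((n - 1).descFactorial i : ℝ)) := by
    have hpow : (c * (n:ℝ)) ^ (n - 1) = (c * n) ^ (n - 1 - i) * (c * n) ^ i := by
      rw [← pow_add]; congr 1; omega
    rw [hpow, ← hDfac]
    field_simp
  -- frac bound
  have hfrac : (c * (n:ℝ)) ^ i / ((n - 1).descFactorial i : ℝ) ≤ d ^ i := by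
    rw [div_le_iff₀ hDpos]
    calc (c * (n:ℝ)) ^ i ≤ (d * ((n - i : ℕ) : ℝ)) ^ i := by
          apply pow_le_pow_left₀ hcn hcd
    _ = d ^ i * (((n - i : ℕ) : ℝ)) ^ i := by rw [mul_pow]
    _ ≤ d ^ i * ((n - 1).descFactorial i : ℝ) := by
          apply mul_le_mul_of_nonneg_left hDlow (by positivity)
  have hterm : ((c * (n:ℝ)) ^ (n - 1 - i) / ((n - 1 - i).factorial : ℝ)) ≤ auxT c n n :=
    auxT_term_le hc0.le n (by omega : n - 1 - i < n)
  have htpos : (0:ℝ) ≤ (c * (n:ℝ)) ^ (n - 1 - i) / ((n - 1 - i).factorial : ℝ) := by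
    positivity
  have hnum : (c * (n:ℝ)) ^ (n - 1) / ((n - 1).factorial : ℝ) < ε * auxT c n n := by
    rw [hkey]
    have h1 : ((c * n) ^ (n - 1 - i) / ((n - 1 - i).factorial : ℝ))
        * ((c * n) ^ i / ((n - 1).descFactorial i : ℝ)) ≤ auxT c n n * d ^ i := by
      apply mul_le_mul hterm hfrac (by positivity) hT0.le
    nlinarith
  have hr0 : (0:ℝ) ≤ ((c * (n:ℝ)) ^ (n - 1) / ((n - 1).factorial : ℝ)) / auxT c n n := by
    positivity
  rw [Real.dist_eq, sub_zero, abs_of_nonneg hr0, div_lt_iff₀ hT0]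
  exact hnum

theorem mean_low_temp (α : ℝ) (h1 : -1 < α) (h2 : α < 0) :
    (fun n : ℕ => sawMean n (1 / (1 + α))) ~[atTop] (fun n : ℕ => |α| * n) := by
  set c : ℝ := 1 + α with hcdef
  have hc0 : 0 < c := by rw [hcdef]; linarith
  have hc1 : c < 1 := by rw [hcdef]; linarith
  have habs : |α| = 1 - c := by rw [abs_of_neg h2, hcdef]; ring
  have h1c : (0:ℝ) < 1 - c := by linarith
  rw [Asymptotics.isEquivalent_iff_tendsto_one]
  · set r : ℕ → ℝ := fun n => ((c * n) ^ (n - 1) / (Nat.factorial (n - 1))) / auxT c n n with hrdef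
    have hr : Tendsto r atTop (nhds 0) := ratio_tendsto hc0 hc1
    have hlim1 : Tendsto (fun n : ℕ => ((1 - c) * (n:ℝ))⁻¹) atTop (nhds 0) := by
      apply Tendsto.inv_tendsto_atTop
      exact Tendsto.const_mul_atTop h1c tendsto_natCast_atTop_atTop
    have hlim2 : Tendsto (fun n : ℕ => (c / (1 - c)) * r n) atTop (nhds 0) := by
      simpa using hr.const_mul (c / (1 - c))
    have hg : Tendsto (fun n : ℕ => 1 - ((1 - c) * (n:ℝ))⁻¹ + (c / (1 - c)) * r n)
        atTop (nhds 1) := by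
      have := (tendsto_const_nhds (x := (1:ℝ)) (f := atTop)).sub hlim1 |>.add hlim2
      simpa using this
    apply Tendsto.congr' _ hg
    filter_upwards [eventually_ge_atTop 1] with n hn
    have hn0 : (0:ℝ) < (n:ℝ) := by exact_mod_cast hn
    have hT1 : (1:ℝ) ≤ auxT c n n := one_le_auxT hc0.le n hn
    simp only [Pi.div_apply]
    rw [sawMean_eq hc0 hn, habs,
      show (c * (n:ℝ)) ^ (n - 1) / ((Nat.factorial (n - 1)):ℝ) / auxT c n n = r n from rfl]
    have h1cne : (1 - c) ≠ 0 := ne_of_gt h1c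
    have hnne : (n:ℝ) ≠ 0 := ne_of_gt hn0
    field_simp
    ring
  · filter_upwards [eventually_ge_atTop 1] with n hn
    have hn0 : (0:ℝ) < (n:ℝ) := by exact_mod_cast hn
    have : |α| ≠ 0 := by rw [habs]; linarith
    positivity
end

section
/- Fix α ∈ (−1,0) and let z_n satisfy 1/z_n = 1 + α. Then the variance of the walk length of the self-avoiding walk on K_n at fugacity z_n satisfies var_{n,z_n}(L_n) ~ (1+α) n as n → ∞. -/
open Filter Finset Real Asymptotics

open Topology

/-!
Put `ν = n / z`. Since `sawWeight n z k` is proportional to `ν ^ (n-1-k) / (n-1-k)!`, the walk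
length is `n - 1 - J` with `J` a Poisson(ν) variable conditioned on `{0, …, n-1}`, so it has the
variance of `J`. The factorial moments of `J` are `ν ^ r P_{n-r} / P_n` with `P_m = ∑_{j<m} ν^j/j!`,
which gives `Var = ν (1 - δ (n - ν (1 - δ)))` where `δ = P(J = n - 1)` is `topMass ν n`; hence
`|Var / ν - 1| ≤ n δ`. For `ν = (1 + α) n` with `α < 0` the Poisson terms near the top grow
geometrically, so `δ` decays exponentially in `n` and `n δ → 0`.
-/

noncomputable def expPartialSum (ν : ℝ) (n : ℕ) : ℝ := ∑ j ∈ range n, ν ^ j / j.factorial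

lemma pow_div_factorial_le_expPartialSum {ν : ℝ} (hν : 0 ≤ ν) {j n : ℕ} (hj : j < n) :
    ν ^ j / j.factorial ≤ expPartialSum ν n :=
  single_le_sum (f := fun j => ν ^ j / j.factorial) (fun _ _ => by positivity) (mem_range.2 hj)

lemma expPartialSum_pos {ν : ℝ} (hν : 0 ≤ ν) {n : ℕ} (hn : 0 < n) : 0 < expPartialSum ν n :=
  lt_of_lt_of_le (by simp) (pow_div_factorial_le_expPartialSum hν hn)

lemma sum_descFactorial_mul_pow_div_factorial (ν : ℝ) (n r : ℕ) :
    ∑ j ∈ range n, (j.descFactorial r : ℝ) * (ν ^ j / j.factorial) =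
      ν ^ r * expPartialSum ν (n - r) := by
  rcases le_or_gt n r with hnr | hrn
  · rw [Nat.sub_eq_zero_of_le hnr, expPartialSum, range_zero, sum_empty, mul_zero]
    refine sum_eq_zero fun j hj => ?_
    rw [Nat.descFactorial_eq_zero_iff_lt.2 ((mem_range.1 hj).trans_le hnr), Nat.cast_zero, zero_mul]
  obtain ⟨m, rfl⟩ := Nat.exists_eq_add_of_le hrn.le
  rw [sum_range_add, Nat.add_sub_cancel_left, expPartialSum, mul_sum]
  have hlow : ∀ j ∈ range r, (j.descFactorial r : ℝ) * (ν ^ j / j.factorial) = 0 := fun j hj => by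
    rw [Nat.descFactorial_eq_zero_iff_lt.2 (mem_range.1 hj), Nat.cast_zero, zero_mul]
  rw [sum_eq_zero hlow, zero_add]
  refine sum_congr rfl fun i _ => ?_
  have hfac : (i.factorial : ℝ) * ((r + i).descFactorial r) = (r + i).factorial := by
    have h := Nat.factorial_mul_descFactorial (Nat.le_add_right r i)
    rw [Nat.add_sub_cancel_left] at h
    exact_mod_cast h
  rw [← hfac, pow_add]
  field_simp

lemma pow_div_factorial_le_mul_pow {ν : ℝ} (hν : 0 ≤ ν) {s m : ℕ} (hsm : s ≤ m) :
    ν ^ m / m.factorial ≤ ν ^ s / s.factorial * (ν / (s + 1)) ^ (m - s) := by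
  induction m, hsm using Nat.le_induction with
  | base => simp
  | succ m hsm ih =>
    have hstep : ν ^ (m + 1) / (m + 1).factorial = ν ^ m / m.factorial * (ν / (m + 1)) := by
      rw [Nat.factorial_succ, pow_succ]; push_cast; field_simp
    rw [hstep, Nat.sub_add_comm hsm, pow_succ, ← mul_assoc]
    gcongr

noncomputable def topMass (ν : ℝ) (n : ℕ) : ℝ := ν ^ (n - 1) / (n - 1).factorial / expPartialSum ν n

def weightedVar {ι : Type*} (s : Finset ι) (p f : ι → ℝ) : ℝ :=
  ∑ i ∈ s, f i ^ 2 * p i - (∑ i ∈ s, f i * p i) ^ 2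

lemma weightedVar_congr {ι : Type*} {s : Finset ι} {p p' f f' : ι → ℝ}
    (hp : ∀ i ∈ s, p i = p' i) (hf : ∀ i ∈ s, f i = f' i) :
    weightedVar s p f = weightedVar s p' f' := by
  have h : ∀ g : ℝ → ℝ, ∑ i ∈ s, g (f i) * p i = ∑ i ∈ s, g (f' i) * p' i :=
    fun g => sum_congr rfl fun i hi => by rw [hp i hi, hf i hi]
  exact congrArg₂ (fun a b => a - b ^ 2) (h (· ^ 2)) (h id)

lemma weightedVar_const_sub {ι : Type*} {s : Finset ι} {p : ι → ℝ} (hp : ∑ i ∈ s, p i = 1)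
    (c : ℝ) (f : ι → ℝ) : weightedVar s p (fun i => c - f i) = weightedVar s p f := by
  have hsq : ∀ i ∈ s, (c - f i) ^ 2 * p i = c ^ 2 * p i - 2 * c * (f i * p i) + f i ^ 2 * p i :=
    fun i _ => by ring
  have hlin : ∀ i ∈ s, (c - f i) * p i = c * p i - f i * p i := fun i _ => by ring
  simp only [weightedVar, sum_congr rfl hsq, sum_congr rfl hlin, sum_add_distrib, sum_sub_distrib,
    ← mul_sum, hp]
  ring

lemma weightedVar_range_reflect (n : ℕ) (p f : ℕ → ℝ) :
    weightedVar (range n) (fun k => p (n - 1 - k)) f =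
      weightedVar (range n) p (fun j => f (n - 1 - j)) := by
  have hrefl : ∀ g : ℕ → ℝ,
      ∑ k ∈ range n, g k * p (n - 1 - k) = ∑ j ∈ range n, g (n - 1 - j) * p j := fun g => by
    rw [← sum_range_reflect]
    refine sum_congr rfl fun j hj => ?_
    rw [Nat.sub_sub_self (by have := mem_range.1 hj; omega)]
  simp only [weightedVar, hrefl]

lemma weightedVar_truncPoisson {ν : ℝ} (hν : 0 < ν) {n : ℕ} (hn : 2 ≤ n) :
    weightedVar (range n) (fun j => ν ^ j / j.factorial / expPartialSum ν n) (↑) =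
      ν * (1 - topMass ν n * (n - ν * (1 - topMass ν n))) := by
  have hmoment : ∀ r, ∑ j ∈ range n,
      (j.descFactorial r : ℝ) * (ν ^ j / j.factorial / expPartialSum ν n) =
        ν ^ r * expPartialSum ν (n - r) / expPartialSum ν n := fun r => by
    rw [← sum_descFactorial_mul_pow_div_factorial, sum_div]
    simp only [mul_div_assoc]
  have hsq : ∀ j : ℕ, (j : ℝ) ^ 2 = j.descFactorial 2 + j.descFactorial 1 := fun j => by
    rw [Nat.cast_descFactorial_two, Nat.descFactorial_one]; ring
  have h1 := hmoment 1
  simp only [Nat.descFactorial_one, pow_one] at h1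
  simp only [weightedVar, hsq, add_mul, sum_add_distrib, hmoment, h1, pow_one]
  obtain ⟨m, rfl⟩ := Nat.exists_eq_add_of_le' hn
  have hPpos := expPartialSum_pos hν.le (n := m + 2) (by omega)
  simp only [topMass, expPartialSum, Nat.add_sub_cancel, show m + 2 - 1 = m + 1 by omega,
    sum_range_succ, Nat.factorial_succ] at hPpos ⊢
  push_cast at hPpos ⊢
  field_simp
  ring

section
variable {n : ℕ} {z ν : ℝ}

lemma sawWeight_eq (hν : ν ≠ 0) (hz : z / n = ν⁻¹) {k : ℕ} (hk : k < n) :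
    sawWeight n z k =
      (n - 1).factorial / ν ^ (n - 1) * (ν ^ (n - 1 - k) / (n - 1 - k).factorial) := by
  have hfac : ((n - 1 - k).factorial : ℝ) * (n - 1).descFactorial k = (n - 1).factorial := by
    exact_mod_cast Nat.factorial_mul_descFactorial (by omega)
  have hpow : ν ^ (n - 1) = ν ^ k * ν ^ (n - 1 - k) := by rw [← pow_add]; congr 1; omega
  rw [sawWeight, hz, ← hfac, hpow, inv_pow]
  field_simp

lemma sawZ_eq_s12 (hν : ν ≠ 0) (hz : z / n = ν⁻¹) :
    sawZ n z = (n - 1).factorial / ν ^ (n - 1) * expPartialSum ν n := by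
  rw [sawZ, ← sum_range_reflect, expPartialSum, mul_sum]
  refine sum_congr rfl fun j hj => ?_
  have hj := mem_range.1 hj
  rw [sawWeight_eq hν hz (by omega), Nat.sub_sub_self (by omega)]

lemma sawProb_eq (hν : 0 < ν) (hz : z / n = ν⁻¹) {k : ℕ} (hk : k < n) :
    sawProb n z k = ν ^ (n - 1 - k) / (n - 1 - k).factorial / expPartialSum ν n := by
  have hC : (n - 1).factorial / ν ^ (n - 1) ≠ 0 := by positivity
  rw [sawProb, sawWeight_eq hν.ne' hz hk, sawZ_eq_s12 hν.ne' hz, mul_div_mul_left _ _ hC]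

lemma sawVar_eq_weightedVar (hν : 0 < ν) (hz : z / n = ν⁻¹) :
    sawVar n z = weightedVar (range n) (fun j => ν ^ j / j.factorial / expPartialSum ν n) (↑) := by
  set q : ℕ → ℝ := fun j => ν ^ j / j.factorial / expPartialSum ν n
  have hq : ∑ j ∈ range n, q j = 1 := by
    rcases n.eq_zero_or_pos with rfl | hn
    · simp only [Nat.cast_zero, div_zero, zero_eq_inv] at hz
      exact absurd hz.symm hν.ne'
    · rw [← sum_div]; exact div_self (expPartialSum_pos hν.le hn).ne'
  have hcast : ∀ j ∈ range n, ((n - 1 - j : ℕ) : ℝ) = ((n - 1 : ℕ) : ℝ) - j := fun j hj => by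
    have := mem_range.1 hj
    push_cast [Nat.cast_sub (show j ≤ n - 1 by omega)]; ring
  calc sawVar n z = weightedVar (range n) (fun k => q (n - 1 - k)) (↑) :=
        weightedVar_congr (fun k hk => sawProb_eq hν hz (mem_range.1 hk)) fun _ _ => rfl
    _ = weightedVar (range n) q (fun j => ((n - 1 : ℕ) : ℝ) - j) := by
      rw [weightedVar_range_reflect]
      exact weightedVar_congr (fun _ _ => rfl) hcast
    _ = weightedVar (range n) q (↑) := weightedVar_const_sub hq _ _

end

lemma topMass_nonneg {ν : ℝ} (hν : 0 ≤ ν) (n : ℕ) : 0 ≤ topMass ν n := by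
  unfold topMass expPartialSum; positivity

lemma topMass_le_pow {ν : ℝ} (hν : 0 ≤ ν) {n s : ℕ} (hs : s < n) :
    topMass ν n ≤ (ν / (s + 1)) ^ (n - 1 - s) := by
  have hs' : ν ^ s / s.factorial ≤ expPartialSum ν n := pow_div_factorial_le_expPartialSum hν hs
  rw [topMass, div_le_iff₀ (expPartialSum_pos hν (by omega))]
  calc ν ^ (n - 1) / (n - 1).factorial
      ≤ ν ^ s / s.factorial * (ν / (s + 1)) ^ (n - 1 - s) :=
        pow_div_factorial_le_mul_pow hν (by omega)
    _ ≤ (ν / (s + 1)) ^ (n - 1 - s) * expPartialSum ν n := by rw [mul_comm]; gcongr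

lemma topMass_le_one {ν : ℝ} (hν : 0 ≤ ν) {n : ℕ} (hn : 0 < n) : topMass ν n ≤ 1 := by
  simpa using topMass_le_pow hν (Nat.sub_one_lt_of_lt hn)

lemma tendsto_mul_pow_floor_mul {ρ β : ℝ} (hρ0 : 0 ≤ ρ) (hρ1 : ρ < 1) (hβ : 0 < β) :
    Tendsto (fun n : ℕ => n * ρ ^ ⌊β * n⌋₊) atTop (𝓝 0) := by
  have hfloor : Tendsto (fun n : ℕ => ⌊β * n⌋₊) atTop atTop :=
    tendsto_nat_floor_atTop.comp (tendsto_natCast_atTop_atTop.const_mul_atTop hβ)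
  have hbound : Tendsto (fun k : ℕ => β⁻¹ * (k * ρ ^ k + ρ ^ k)) atTop (𝓝 0) := by
    simpa using ((tendsto_self_mul_const_pow_of_lt_one hρ0 hρ1).add
      (tendsto_pow_atTop_nhds_zero_of_lt_one hρ0 hρ1)).const_mul β⁻¹
  refine squeeze_zero (fun n => by positivity) (fun n => ?_) (hbound.comp hfloor)
  have hn : (n : ℝ) ≤ β⁻¹ * (⌊β * n⌋₊ + 1) := by
    rw [le_inv_mul_iff₀ hβ]; exact (Nat.lt_floor_add_one _).le
  calc (n : ℝ) * ρ ^ ⌊β * n⌋₊ ≤ β⁻¹ * (⌊β * n⌋₊ + 1) * ρ ^ ⌊β * n⌋₊ := by gcongr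
    _ = _ := by simp only [Function.comp]; ring

lemma tendsto_mul_topMass {a : ℝ} (ha0 : 0 < a) (ha1 : a < 1) :
    Tendsto (fun n : ℕ => n * topMass (a * n) n) atTop (𝓝 0) := by
  set β := (1 - a) / 2 with hβ
  set ρ := a / (1 - β)
  have hβ0 : 0 < β := by rw [hβ]; linarith
  have hβ1 : β < 1 := by rw [hβ]; linarith
  have hρ0 : 0 ≤ ρ := div_nonneg ha0.le (by linarith)
  have hρ1 : ρ < 1 := by rw [div_lt_one (by linarith), hβ]; linarith
  refine squeeze_zero'
    (Eventually.of_forall fun n => mul_nonneg n.cast_nonneg (topMass_nonneg (by positivity) n)) ?_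
    (tendsto_mul_pow_floor_mul hρ0 hρ1 hβ0)
  filter_upwards [eventually_gt_atTop 0] with n hn
  have hn' : (0 : ℝ) < n := by exact_mod_cast hn
  -- from index `n - 1 - t` on, consecutive Poisson terms shrink by a factor `≤ ρ`
  set t := ⌊β * n⌋₊
  have ht : (t : ℝ) ≤ β * n := Nat.floor_le (by positivity)
  have htn : t < n := by
    have : (t : ℝ) < n := ht.trans_lt (by nlinarith)
    exact_mod_cast this
  have hbase : a * n / ((n - 1 - t : ℕ) + 1) ≤ ρ := by
    rw [div_le_div_iff₀ (by positivity) (by linarith), Nat.cast_sub (by omega), Nat.cast_sub hn]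
    push_cast
    nlinarith
  have hmass := topMass_le_pow (by positivity : 0 ≤ a * n) (show n - 1 - t < n by omega)
  rw [show n - 1 - (n - 1 - t) = t by omega] at hmass
  gcongr
  exact hmass.trans (pow_le_pow_left₀ (by positivity) hbase t)

lemma abs_sawVar_div_sub_one_le {n : ℕ} {z ν : ℝ} (hn : 2 ≤ n) (hν : 0 < ν) (hνn : ν ≤ n)
    (hz : z / n = ν⁻¹) : |sawVar n z / ν - 1| ≤ n * topMass ν n := by
  have hδ0 := topMass_nonneg hν.le n
  have hδ1 := topMass_le_one hν.le (n := n) (by omega)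
  rw [sawVar_eq_weightedVar hν hz, weightedVar_truncPoisson hν hn, mul_div_cancel_left₀ _ hν.ne',
    sub_sub_cancel_left, abs_neg, abs_mul, abs_of_nonneg hδ0, mul_comm]
  gcongr
  rw [abs_le]
  constructor <;> nlinarith

theorem var_low_temp (α : ℝ) (h1 : -1 < α) (h2 : α < 0) :
    (fun n : ℕ => sawVar n (1 / (1 + α))) ~[atTop] (fun n : ℕ => (1 + α) * n) := by
  have ha : 0 < 1 + α := by linarith
  rw [isEquivalent_iff_tendsto_one ((eventually_gt_atTop 0).mono fun n hn => by positivity)]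
  refine tendsto_sub_nhds_zero_iff.1 (squeeze_zero_norm' ?_ (tendsto_mul_topMass ha (by linarith)))
  filter_upwards [eventually_ge_atTop 2] with n hn
  have hn' : (0 : ℝ) < n := by positivity
  exact abs_sawVar_div_sub_one_le hn (by positivity) (by nlinarith) (by field_simp)
end

section
/- At the critical fugacity z_n = 1 (i.e. α arbitrary with β > 1/2, in particular z_n ≡ 1), the mean walk length of the self-avoiding walk on K_n satisfies E_{n,1}(L_n) ~ √(2/π)·√n as n → ∞. -/
open Filter Finset Real Asymptotics

/-! At `z = 1` the weights `w_k = ∏_{i<k} (1 - (i+1)/n)` satisfy `(k+1) w_k = n (w_k - w_{k+1})`,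
which telescopes to `E L = n / Z_n - 1` with `Z_n = ∑_k w_k`. Comparing `1 - x` with `e^{-x}` and
with `e^{-x/(1-x)}` traps `w_k` between `e^{-(k+1)²/2(n-K)}` (for `k ≤ K`) and `e^{-k²/2n}`, and
comparing these monotone sums with Gaussian integrals gives `Z_n ~ √(πn/2)`; the lower bound is sharp
once the truncation satisfies `√n ≪ K ≪ n`. -/

open MeasureTheory Set Topology

lemma sawWeight_zero (n : ℕ) (z : ℝ) : sawWeight n z 0 = 1 := by simp [sawWeight]

lemma sawWeight_nonneg (n : ℕ) {z : ℝ} (hz : 0 ≤ z) (k : ℕ) : 0 ≤ sawWeight n z k := by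
  unfold sawWeight; positivity

lemma sawWeight_self {n : ℕ} (hn : 0 < n) (z : ℝ) : sawWeight n z n = 0 := by
  simp [sawWeight, Nat.descFactorial_eq_zero_iff_lt.2 (Nat.sub_lt hn one_pos)]

lemma sawWeight_succ (n : ℕ) (z : ℝ) (k : ℕ) :
    sawWeight n z (k + 1) = z / n * ((n - 1 - k : ℕ) : ℝ) * sawWeight n z k := by
  simp only [sawWeight, Nat.descFactorial_succ, pow_succ, Nat.cast_mul]; ring

lemma one_le_sawZ {n : ℕ} (hn : 0 < n) {z : ℝ} (hz : 0 ≤ z) : 1 ≤ sawZ n z := by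
  rw [← sawWeight_zero n z]
  exact single_le_sum (fun k _ => sawWeight_nonneg n hz k) (mem_range.2 hn)

lemma succ_mul_sawWeight_one {n k : ℕ} (hk : k < n) :
    ((k : ℝ) + 1) * sawWeight n 1 k = n * (sawWeight n 1 k - sawWeight n 1 (k + 1)) := by
  have hn : (n : ℝ) ≠ 0 := Nat.cast_ne_zero.2 (by omega)
  rw [sawWeight_succ]
  push_cast [Nat.sub_sub, Nat.cast_sub (show 1 + k ≤ n by omega)]
  field_simp
  ring

lemma sawMean_one {n : ℕ} (hn : 0 < n) : sawMean n 1 = n / sawZ n 1 - 1 := by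
  have htel : ∑ k ∈ range n, ((k : ℝ) + 1) * sawWeight n 1 k = n := by
    rw [sum_congr rfl fun k hk => succ_mul_sawWeight_one (mem_range.1 hk), ← mul_sum,
      sum_range_sub' (sawWeight n 1), sawWeight_zero, sawWeight_self hn, sub_zero, mul_one]
  have hsum : ∑ k ∈ range n, (k : ℝ) * sawWeight n 1 k = n - sawZ n 1 := by
    simp only [add_mul, one_mul, sum_add_distrib] at htel
    unfold sawZ
    linarith
  have hZ : sawZ n 1 ≠ 0 := (zero_lt_one.trans_le (one_le_sawZ hn zero_le_one)).ne'
  simp only [sawMean, sawProb, mul_div_assoc', ← sum_div, hsum]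
  field_simp

lemma sawWeight_one_eq_prod {n k : ℕ} (hk : k ≤ n) :
    sawWeight n 1 k = ∏ i ∈ range k, (1 - ((i : ℝ) + 1) / n) := by
  induction k with
  | zero => simp [sawWeight_zero]
  | succ k ih =>
    have hn : (n : ℝ) ≠ 0 := Nat.cast_ne_zero.2 (by omega)
    rw [sawWeight_succ, ih (by omega), prod_range_succ]
    push_cast [Nat.sub_sub, Nat.cast_sub (show 1 + k ≤ n by omega)]
    field_simp
    ring

lemma prod_range_exp_neg_succ_div (k : ℕ) (m : ℝ) :
    ∏ i ∈ range k, exp (-(((i : ℝ) + 1) / m)) = exp (-(k * (k + 1) / (2 * m))) := by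
  induction k with
  | zero => simp
  | succ k ih =>
    rw [prod_range_succ, ih, ← exp_add]
    push_cast
    ring_nf

lemma sawWeight_one_le_exp {n k : ℕ} (hk : k ≤ n) :
    sawWeight n 1 k ≤ exp (-(k : ℝ) ^ 2 / (2 * n)) := by
  rw [sawWeight_one_eq_prod hk]
  calc ∏ i ∈ range k, (1 - ((i : ℝ) + 1) / n)
      ≤ ∏ i ∈ range k, exp (-(((i : ℝ) + 1) / n)) := by
        refine prod_le_prod (fun i hi => ?_) fun i _ => one_sub_le_exp_neg _
        have : (i : ℝ) + 1 ≤ n := by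
          exact_mod_cast (show i + 1 ≤ n by have := mem_range.1 hi; omega)
        rw [sub_nonneg]
        exact div_le_one_of_le₀ this (Nat.cast_nonneg n)
    _ = exp (-(k * (k + 1) / (2 * n))) := prod_range_exp_neg_succ_div k n
    _ ≤ exp (-(k : ℝ) ^ 2 / (2 * n)) := by
        rw [neg_div]
        gcongr
        nlinarith

lemma exp_neg_div_one_sub_le_one_sub {x : ℝ} (hx : x < 1) : exp (-(x / (1 - x))) ≤ 1 - x := by
  have h : 0 < 1 - x := by linarith
  rw [exp_neg, inv_le_comm₀ (exp_pos _) h]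
  calc (1 - x)⁻¹ = x / (1 - x) + 1 := by field_simp; ring
    _ ≤ exp (x / (1 - x)) := add_one_le_exp _

lemma exp_le_sawWeight_one {n k K : ℕ} (hkK : k ≤ K) (hKn : K < n) :
    exp (-((k : ℝ) + 1) ^ 2 / (2 * (n - K))) ≤ sawWeight n 1 k := by
  have hK : (K : ℝ) < n := by exact_mod_cast hKn
  rw [sawWeight_one_eq_prod (by omega)]
  calc exp (-((k : ℝ) + 1) ^ 2 / (2 * (n - K)))
      ≤ exp (-(k * (k + 1) / (2 * (n - K)))) := by
        rw [neg_div]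
        gcongr
        linarith
    _ = ∏ i ∈ range k, exp (-(((i : ℝ) + 1) / (n - K))) := (prod_range_exp_neg_succ_div k _).symm
    _ ≤ ∏ i ∈ range k, (1 - ((i : ℝ) + 1) / n) := by
        refine prod_le_prod (fun _ _ => (exp_pos _).le) fun i hi => ?_
        have hiK : (i : ℝ) + 1 ≤ K := by
          exact_mod_cast (show i + 1 ≤ K by have := mem_range.1 hi; omega)
        have hn : (0 : ℝ) < n := by linarith
        refine le_trans ?_ (exp_neg_div_one_sub_le_one_sub ?_)
        · rw [one_sub_div hn.ne', div_div_div_cancel_right₀ hn.ne']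
          gcongr
        · rw [div_lt_one hn]; linarith

lemma integrable_exp_neg_sq_div_two : Integrable fun x : ℝ => exp (-x ^ 2 / 2) := by
  simpa [neg_div, div_eq_inv_mul] using integrable_exp_neg_mul_sq (b := 1 / 2) (by norm_num)

lemma integral_Ioi_exp_neg_sq_div_two : ∫ x in Ioi (0 : ℝ), exp (-x ^ 2 / 2) = √(π / 2) := by
  simp_rw [show ∀ x : ℝ, -x ^ 2 / 2 = -(1 / 2) * x ^ 2 from fun x => by ring]
  rw [integral_gaussian_Ioi, show π / (1 / 2) = 2 ^ 2 * (π / 2) by ring, sqrt_mul (by positivity),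
    sqrt_sq zero_le_two]
  ring

lemma integral_exp_neg_sq_div_two_le {T : ℝ} (hT : 0 ≤ T) :
    ∫ x in 0..T, exp (-x ^ 2 / 2) ≤ √(π / 2) := by
  rw [← integral_Ioi_exp_neg_sq_div_two, intervalIntegral.integral_of_le hT]
  exact setIntegral_mono_set integrable_exp_neg_sq_div_two.integrableOn
    (Eventually.of_forall fun _ => (exp_pos _).le) Ioc_subset_Ioi_self.eventuallyLE

lemma tendsto_integral_exp_neg_sq_div_two :
    Tendsto (fun T => ∫ x in 0..T, exp (-x ^ 2 / 2)) atTop (𝓝 √(π / 2)) := by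
  rw [← integral_Ioi_exp_neg_sq_div_two]
  exact intervalIntegral_tendsto_integral_Ioi 0 integrable_exp_neg_sq_div_two.integrableOn
    tendsto_id

lemma integral_exp_neg_div_sq_div_two {s : ℝ} (hs : s ≠ 0) (T : ℝ) :
    ∫ x in 0..T, exp (-(x / s) ^ 2 / 2) = s * ∫ x in 0..T / s, exp (-x ^ 2 / 2) := by
  simpa using intervalIntegral.integral_comp_div (a := 0) (b := T) (fun x => exp (-x ^ 2 / 2)) hs

lemma antitoneOn_exp_neg_div_sq_div_two (s : ℝ) :
    AntitoneOn (fun x => exp (-(x / s) ^ 2 / 2)) (Ici 0) := by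
  intro x hx y _ hxy
  simp only [div_pow]
  gcongr

lemma AntitoneOn.sum_range_succ_le_add_integral {f : ℝ → ℝ} (hf : AntitoneOn f (Ici 0))
    (N : ℕ) : ∑ k ∈ range (N + 1), f k ≤ f 0 + ∫ x in 0..N, f x := by
  have h := (hf.mono Icc_subset_Ici_self).sum_le_integral (x₀ := 0) (a := N)
  simp only [zero_add, Nat.cast_add, Nat.cast_one] at h
  rw [sum_range_succ']
  push_cast
  linarith

lemma AntitoneOn.integral_sub_le_sum_range {f : ℝ → ℝ} (hf : AntitoneOn f (Ici 0))
    (hf0 : ∀ x, 0 ≤ f x) (N : ℕ) : (∫ x in 0..N, f x) - f 0 ≤ ∑ k ∈ range N, f (k + 1) := by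
  have h := (hf.mono Icc_subset_Ici_self).integral_le_sum (x₀ := 0) (a := N)
  have hsum := sum_range_succ' (fun k : ℕ => f k) N
  rw [sum_range_succ] at hsum
  simp only [zero_add, Nat.cast_add, Nat.cast_one, Nat.cast_zero] at h hsum
  linarith [hf0 N]

lemma sawZ_one_le (n : ℕ) : sawZ n 1 ≤ 1 + √(π / 2) * √n := by
  rcases n with _ | N
  · simp [sawZ]
  set s := √((N + 1 : ℕ) : ℝ)
  have hs : 0 < s := sqrt_pos.2 (by positivity)
  calc sawZ (N + 1) 1 ≤ ∑ k ∈ range (N + 1), exp (-(k / s) ^ 2 / 2) := by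
        refine sum_le_sum fun k hk => (sawWeight_one_le_exp (mem_range.1 hk).le).trans_eq ?_
        rw [div_pow, sq_sqrt (Nat.cast_nonneg _)]
        ring_nf
    _ ≤ exp (-(0 / s) ^ 2 / 2) + ∫ x in 0..N, exp (-(x / s) ^ 2 / 2) :=
        (antitoneOn_exp_neg_div_sq_div_two s).sum_range_succ_le_add_integral N
    _ = 1 + s * ∫ x in 0..N / s, exp (-x ^ 2 / 2) := by
        rw [integral_exp_neg_div_sq_div_two hs.ne']
        simp
    _ ≤ 1 + s * √(π / 2) := by
        gcongr
        exact integral_exp_neg_sq_div_two_le (by positivity)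
    _ = 1 + √(π / 2) * s := by ring

lemma sawZ_one_ge {n K : ℕ} (hKn : K < n) :
    √(n - K) * (∫ x in 0..(K + 1) / √(n - K), exp (-x ^ 2 / 2)) - 1 ≤ sawZ n 1 := by
  have hnK : (0 : ℝ) < n - K := sub_pos.2 (by exact_mod_cast hKn)
  set t := √((n : ℝ) - K)
  have ht : 0 < t := sqrt_pos.2 hnK
  calc t * (∫ x in 0..(K + 1) / t, exp (-x ^ 2 / 2)) - 1
      = (∫ x in 0..(K + 1 : ℕ), exp (-(x / t) ^ 2 / 2)) - exp (-(0 / t) ^ 2 / 2) := by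
        rw [integral_exp_neg_div_sq_div_two ht.ne']
        simp
    _ ≤ ∑ k ∈ range (K + 1), exp (-(((k : ℝ) + 1) / t) ^ 2 / 2) :=
        (antitoneOn_exp_neg_div_sq_div_two t).integral_sub_le_sum_range (fun _ => (exp_pos _).le)
          (K + 1)
    _ ≤ ∑ k ∈ range (K + 1), sawWeight n 1 k := by
        refine sum_le_sum fun k hk => le_trans (le_of_eq ?_)
          (exp_le_sawWeight_one (Nat.lt_succ_iff.1 (mem_range.1 hk)) hKn)
        rw [div_pow, sq_sqrt hnK.le]
        congr 1
        field_simp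
    _ ≤ sawZ n 1 := sum_le_sum_of_subset_of_nonneg (range_subset_range.2 hKn)
        fun k _ _ => sawWeight_nonneg n zero_le_one k

lemma tendsto_one_div_sqrt_natCast : Tendsto (fun n : ℕ => 1 / √(n : ℝ)) atTop (𝓝 0) :=
  tendsto_const_nhds.div_atTop (tendsto_sqrt_atTop.comp tendsto_natCast_atTop_atTop)

lemma exists_tendsto_div_zero_and_div_sqrt_atTop :
    ∃ K : ℕ → ℕ, Tendsto (fun n => (K n : ℝ) / n) atTop (𝓝 0) ∧
      Tendsto (fun n => ((K n : ℝ) + 1) / √n) atTop atTop := by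
  refine ⟨fun n => ⌊(n : ℝ) ^ (3 / 4 : ℝ)⌋₊, ?_, ?_⟩
  · refine tendsto_of_tendsto_of_tendsto_of_le_of_le' tendsto_const_nhds
      ((tendsto_rpow_neg_atTop (y := 1 / 4) (by norm_num)).comp tendsto_natCast_atTop_atTop)
      (Eventually.of_forall fun n => by positivity) ?_
    filter_upwards [eventually_gt_atTop 0] with n hn
    have hn' : (0 : ℝ) < n := by exact_mod_cast hn
    calc (⌊(n : ℝ) ^ (3 / 4 : ℝ)⌋₊ : ℝ) / n ≤ (n : ℝ) ^ (3 / 4 : ℝ) / n := by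
          gcongr; exact Nat.floor_le (by positivity)
      _ = (n : ℝ) ^ (-(1 / 4) : ℝ) := by
          rw [← rpow_sub_one hn'.ne']; norm_num
  · refine tendsto_atTop_mono' _ ?_
      ((tendsto_rpow_atTop (y := 1 / 4) (by norm_num)).comp tendsto_natCast_atTop_atTop)
    filter_upwards [eventually_gt_atTop 0] with n hn
    have hn' : (0 : ℝ) < n := by exact_mod_cast hn
    calc (n : ℝ) ^ (1 / 4 : ℝ) = (n : ℝ) ^ (3 / 4 : ℝ) / √n := by
          rw [sqrt_eq_rpow, ← rpow_sub hn']; norm_num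
      _ ≤ (⌊(n : ℝ) ^ (3 / 4 : ℝ)⌋₊ + 1) / √n := by
          gcongr; exact (Nat.lt_floor_add_one _).le

lemma tendsto_sawZ_one_div_sqrt :
    Tendsto (fun n : ℕ => sawZ n 1 / √n) atTop (𝓝 √(π / 2)) := by
  obtain ⟨K, hK, hK'⟩ := exists_tendsto_div_zero_and_div_sqrt_atTop
  have hKn : ∀ᶠ n in atTop, K n < n := by
    filter_upwards [hK.eventually (gt_mem_nhds one_pos), eventually_gt_atTop 0] with n h hn
    exact_mod_cast (div_lt_one (by positivity)).1 h
  have hratio : Tendsto (fun n => √(n - K n) / √n) atTop (𝓝 1) := by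
    have h := ((tendsto_const_nhds (x := (1 : ℝ))).sub hK).sqrt
    rw [sub_zero, sqrt_one] at h
    refine h.congr' ?_
    filter_upwards [eventually_gt_atTop 0] with n hn
    rw [← sqrt_div' _ (Nat.cast_nonneg n), sub_div, div_self (by positivity)]
  have hcut : Tendsto (fun n => ((K n : ℝ) + 1) / √(n - K n)) atTop atTop := by
    refine tendsto_atTop_mono' _ ?_ hK'
    filter_upwards [hKn] with n hn
    have : (0 : ℝ) < n - K n := sub_pos.2 (by exact_mod_cast hn)
    gcongr
    linarith [Nat.cast_nonneg (α := ℝ) (K n)]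
  have hlower := (hratio.mul (tendsto_integral_exp_neg_sq_div_two.comp hcut)).sub
    tendsto_one_div_sqrt_natCast
  rw [one_mul, sub_zero] at hlower
  have hupper := tendsto_one_div_sqrt_natCast.add_const (√(π / 2))
  rw [zero_add] at hupper
  refine tendsto_of_tendsto_of_tendsto_of_le_of_le' hlower hupper ?_ ?_
  · filter_upwards [hKn] with n hn
    have hs : 0 < √(n : ℝ) := sqrt_pos.2 (by exact_mod_cast (Nat.zero_le _).trans_lt hn)
    simp only [Function.comp_apply]
    rw [div_mul_eq_mul_div, div_sub_div_same]
    exact div_le_div_of_nonneg_right (sawZ_one_ge hn) hs.le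
  · filter_upwards [eventually_gt_atTop 0] with n hn
    have hs : 0 < √(n : ℝ) := sqrt_pos.2 (by exact_mod_cast hn)
    rw [div_add' _ _ _ hs.ne']
    exact div_le_div_of_nonneg_right ((sawZ_one_le n).trans_eq (by ring)) hs.le

lemma sawZ_one_isEquivalent :
    (fun n : ℕ => sawZ n 1) ~[atTop] fun n => √(π / 2) * √n := by
  refine isEquivalent_of_tendsto_one ?_
  convert tendsto_sawZ_one_div_sqrt.div_const (√(π / 2)) using 1
  · ext n
    simp only [Pi.div_apply, div_div, mul_comm]
  · rw [div_self (by positivity)]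

theorem mean_critical :
    (fun n : ℕ => sawMean n 1) ~[atTop]
      (fun n : ℕ => Real.sqrt (2 / Real.pi) * Real.sqrt n) := by
  have hdiv : (fun n : ℕ => (n : ℝ) / sawZ n 1) ~[atTop] fun n => √(2 / π) * √n := by
    refine (IsEquivalent.refl.div sawZ_one_isEquivalent).congr_right
      (Eventually.of_forall fun n => ?_)
    simp only [Pi.div_apply]
    rw [← inv_div π 2, sqrt_inv]
    nth_rw 1 [← mul_self_sqrt (Nat.cast_nonneg (α := ℝ) n)]
    field_simp
  have hone : (fun _ : ℕ => (1 : ℝ)) =o[atTop] fun n : ℕ => √(2 / π) * √n :=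
    isLittleO_const_left.2 <| Or.inr <| tendsto_norm_atTop_atTop.comp <|
      (tendsto_sqrt_atTop.comp tendsto_natCast_atTop_atTop).const_mul_atTop (by positivity)
  refine (hdiv.sub_isLittleO hone).congr_left ?_
  filter_upwards [eventually_gt_atTop 0] with n hn
  exact (sawMean_one hn).symm
end

section
/- Fix α > 0 and β ∈ (0,1/2), and let 1/z_n = 1 + α n^{-β}. Then E_{n,z_n}(L_n) ~ n^β/α and var_{n,z_n}(L_n) ~ n^{2β}/α² as n → ∞. -/
open Filter Finset Real Asymptotics

open Topology

/-! With `q = 1 - z`, the weight `(z/n)^k (n-1)_k` lies between `z^k (1 - k²/n)` and `z^k`, so the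
moment `∑ k^m (z/n)^k (n-1)_k` differs from the geometric moment `∑ k^m z^k ≈ m!/q^(m+1)` by at most
`(m+2)!/(q^(m+3) n)`. When `q² n → ∞` (here `q ≈ α n^(-β)` with `β < 1/2`) this relative error
vanishes, so the length is asymptotically geometric with parameter `z`:
its mean is `~ 1/q` and its variance `~ 2/q² - 1/q² = 1/q²`. -/

noncomputable def sawMoment (m n : ℕ) (z : ℝ) : ℝ :=
  ∑ k ∈ range n, (k : ℝ) ^ m * sawWeight n z k

lemma sawZ_eq_sawMoment_zero (n : ℕ) (z : ℝ) : sawZ n z = sawMoment 0 n z := by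
  simp [sawZ, sawMoment]

lemma sawMean_eq_s15 (n : ℕ) (z : ℝ) : sawMean n z = sawMoment 1 n z / sawMoment 0 n z := by
  simp only [sawMean, sawProb, sawMoment, sawZ_eq_sawMoment_zero, Finset.sum_div, mul_div_assoc,
    pow_one]

lemma sawVar_eq (n : ℕ) (z : ℝ) :
    sawVar n z = sawMoment 2 n z / sawMoment 0 n z - (sawMoment 1 n z / sawMoment 0 n z) ^ 2 := by
  simp only [sawVar, sawMean_eq_s15, sawProb, sawMoment, sawZ_eq_sawMoment_zero, Finset.sum_div,
    mul_div_assoc]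

section Weight

variable {n : ℕ} {z : ℝ}

lemma sawWeight_eq_zero (hn : 0 < n) {k : ℕ} (hk : n ≤ k) : sawWeight n z k = 0 := by
  rw [sawWeight, Nat.descFactorial_eq_zero_iff_lt.mpr (by omega), Nat.cast_zero, mul_zero]

lemma sawWeight_le_pow (hz : 0 ≤ z) (hn : 0 < n) (k : ℕ) : sawWeight n z k ≤ z ^ k := by
  have hn' : (0 : ℝ) < n := by exact_mod_cast hn
  have hdesc : ((n - 1).descFactorial k : ℝ) ≤ (n : ℝ) ^ k := by
    exact_mod_cast (Nat.descFactorial_le_pow (n - 1) k).trans (Nat.pow_le_pow_left (by omega) k)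
  calc sawWeight n z k ≤ (z / n) ^ k * (n : ℝ) ^ k :=
        mul_le_mul_of_nonneg_left hdesc (by positivity)
    _ = z ^ k := by rw [← mul_pow, div_mul_cancel₀ z hn'.ne']

-- Bernoulli's inequality applied to `(n-1)_k ≥ (n-k)^k`.
lemma pow_mul_one_sub_le_sawWeight (hz : 0 ≤ z) (hn : 0 < n) (k : ℕ) :
    z ^ k * (1 - (k : ℝ) ^ 2 / n) ≤ sawWeight n z k := by
  have hn' : (0 : ℝ) < n := by exact_mod_cast hn
  rcases lt_or_ge k n with hk | hk
  · have hdesc : ((n - k : ℕ) : ℝ) ^ k ≤ (n - 1).descFactorial k := by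
      have := Nat.pow_sub_le_descFactorial (n - 1) k
      rw [show n - 1 + 1 - k = n - k by omega] at this
      exact_mod_cast this
    have hkn : (k : ℝ) / n ≤ 1 := (div_le_one hn').mpr (by exact_mod_cast hk.le)
    have hbern : 1 - (k : ℝ) ^ 2 / n ≤ (1 - k / n) ^ k :=
      calc 1 - (k : ℝ) ^ 2 / n = 1 + k * -(k / n : ℝ) := by ring
        _ ≤ (1 + -(k / n : ℝ)) ^ k := one_add_mul_le_pow (by linarith) k
        _ = (1 - k / n) ^ k := by ring
    calc z ^ k * (1 - (k : ℝ) ^ 2 / n) ≤ z ^ k * (1 - k / n) ^ k :=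
          mul_le_mul_of_nonneg_left hbern (by positivity)
      _ = (z / n) ^ k * ((n - k : ℕ) : ℝ) ^ k := by
          rw [Nat.cast_sub hk.le, ← mul_pow, ← mul_pow]
          congr 1
          field_simp
      _ ≤ sawWeight n z k := mul_le_mul_of_nonneg_left hdesc (by positivity)
  · rw [sawWeight_eq_zero hn hk]
    have : (n : ℝ) ≤ (k : ℝ) ^ 2 := by
      exact_mod_cast hk.trans (Nat.le_self_pow two_ne_zero k)
    exact mul_nonpos_of_nonneg_of_nonpos (by positivity)
      (by rw [sub_nonpos, le_div_iff₀ hn', one_mul]; exact this)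

lemma hasSum_sawMoment (hn : 0 < n) (m : ℕ) :
    HasSum (fun k : ℕ => (k : ℝ) ^ m * sawWeight n z k) (sawMoment m n z) :=
  hasSum_sum_of_ne_finset_zero fun k hk => by
    rw [sawWeight_eq_zero hn (by simpa using hk), mul_zero]

end Weight

section GeometricMoments

variable {z : ℝ}

lemma pow_le_factorial_mul_choose (j k : ℕ) : k ^ j ≤ j.factorial * (k + j).choose j := by
  rw [← Nat.descFactorial_eq_factorial_mul_choose]
  calc k ^ j ≤ (k + j + 1 - j) ^ j := Nat.pow_le_pow_left (by omega) j
    _ ≤ (k + j).descFactorial j := Nat.pow_sub_le_descFactorial (k + j) j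

lemma tsum_pow_mul_geometric_le (j : ℕ) (hz0 : 0 ≤ z) (hz1 : z < 1) :
    ∑' k : ℕ, (k : ℝ) ^ j * z ^ k ≤ j.factorial / (1 - z) ^ (j + 1) := by
  have hz : ‖z‖ < 1 := by rwa [Real.norm_of_nonneg hz0]
  have hchoose := (hasSum_choose_mul_geometric_of_norm_lt_one j hz).mul_left (j.factorial : ℝ)
  rw [mul_one_div] at hchoose
  refine hasSum_le (fun k => ?_) (summable_pow_mul_geometric_of_norm_lt_one j hz).hasSum hchoose
  rw [← mul_assoc]
  exact mul_le_mul_of_nonneg_right (by exact_mod_cast pow_le_factorial_mul_choose j k)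
    (pow_nonneg hz0 k)

lemma hasSum_sq_mul_geometric (hz : ‖z‖ < 1) :
    HasSum (fun k : ℕ => (k : ℝ) ^ 2 * z ^ k) (z * (1 + z) / (1 - z) ^ 3) := by
  have h1 : 1 - z ≠ 0 := sub_ne_zero.mpr (fun h => by simp [← h] at hz)
  have hsum := (((hasSum_choose_mul_geometric_of_norm_lt_one 2 hz).mul_left 2).sub
    ((hasSum_choose_mul_geometric_of_norm_lt_one 1 hz).mul_left 3)).add
    (hasSum_geometric_of_norm_lt_one hz)
  have hterm (k : ℕ) : (k : ℝ) ^ 2 * z ^ k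
      = 2 * (((k + 2).choose 2 : ℕ) * z ^ k) - 3 * (((k + 1).choose 1 : ℕ) * z ^ k) + z ^ k := by
    rw [Nat.cast_choose_two, Nat.choose_one_right]
    push_cast
    ring
  have hvalue : z * (1 + z) / (1 - z) ^ 3
      = 2 * (1 / (1 - z) ^ (2 + 1)) - 3 * (1 / (1 - z) ^ (1 + 1)) + (1 - z)⁻¹ := by
    field_simp
    ring
  rw [funext hterm, hvalue]
  exact hsum

end GeometricMoments

section Sandwich

variable {n : ℕ} {z : ℝ}

lemma sawMoment_le_tsum (hz0 : 0 ≤ z) (hz1 : z < 1) (hn : 0 < n) (m : ℕ) :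
    sawMoment m n z ≤ ∑' k : ℕ, (k : ℝ) ^ m * z ^ k := by
  have hz : ‖z‖ < 1 := by rwa [Real.norm_of_nonneg hz0]
  exact hasSum_le (fun k => mul_le_mul_of_nonneg_left (sawWeight_le_pow hz0 hn k) (by positivity))
    (hasSum_sawMoment hn m) (summable_pow_mul_geometric_of_norm_lt_one m hz).hasSum

lemma one_sub_pow_mul_tsum_sub_le (hz0 : 0 ≤ z) (hz1 : z < 1) (hn : 0 < n) (m : ℕ) :
    (1 - z) ^ (m + 1) * ∑' k : ℕ, (k : ℝ) ^ m * z ^ k - (m + 2).factorial / ((1 - z) ^ 2 * n)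
      ≤ (1 - z) ^ (m + 1) * sawMoment m n z := by
  have hz : ‖z‖ < 1 := by rwa [Real.norm_of_nonneg hz0]
  have hq : 0 < 1 - z := sub_pos.mpr hz1
  have hn' : (0 : ℝ) < n := by exact_mod_cast hn
  have hlower : ∑' k : ℕ, (k : ℝ) ^ m * z ^ k - (∑' k : ℕ, (k : ℝ) ^ (m + 2) * z ^ k) / n
      ≤ sawMoment m n z := by
    refine hasSum_le (fun k => ?_)
      ((summable_pow_mul_geometric_of_norm_lt_one m hz).hasSum.sub
        ((summable_pow_mul_geometric_of_norm_lt_one (m + 2) hz).hasSum.div_const n))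
      (hasSum_sawMoment hn m)
    calc (k : ℝ) ^ m * z ^ k - (k : ℝ) ^ (m + 2) * z ^ k / n
        = (k : ℝ) ^ m * (z ^ k * (1 - (k : ℝ) ^ 2 / n)) := by ring
      _ ≤ (k : ℝ) ^ m * sawWeight n z k :=
          mul_le_mul_of_nonneg_left (pow_mul_one_sub_le_sawWeight hz0 hn k) (by positivity)
  have herror : (1 - z) ^ (m + 1) * ((∑' k : ℕ, (k : ℝ) ^ (m + 2) * z ^ k) / n)
      ≤ (m + 2).factorial / ((1 - z) ^ 2 * n) := by
    calc (1 - z) ^ (m + 1) * ((∑' k : ℕ, (k : ℝ) ^ (m + 2) * z ^ k) / n)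
        ≤ (1 - z) ^ (m + 1) * ((m + 2).factorial / (1 - z) ^ (m + 2 + 1) / n) := by
          gcongr
          exact tsum_pow_mul_geometric_le (m + 2) hz0 hz1
      _ = (m + 2).factorial / ((1 - z) ^ 2 * n) := by
          field_simp
          ring
  nlinarith [mul_le_mul_of_nonneg_left hlower (pow_nonneg hq.le (m + 1))]

end Sandwich

section HighTemperature

variable {z : ℕ → ℝ}

lemma tendsto_one_sub_pow_mul_sawMoment (m : ℕ) {c : ℝ}
    (hz : ∀ᶠ n in atTop, 0 ≤ z n ∧ z n < 1)
    (hzn : Tendsto (fun n => (1 - z n) ^ 2 * n) atTop atTop)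
    (hc : Tendsto (fun n => (1 - z n) ^ (m + 1) * ∑' k : ℕ, (k : ℝ) ^ m * z n ^ k) atTop (𝓝 c)) :
    Tendsto (fun n => (1 - z n) ^ (m + 1) * sawMoment m n (z n)) atTop (𝓝 c) := by
  have herror : Tendsto (fun n => ((m + 2).factorial : ℝ) / ((1 - z n) ^ 2 * n)) atTop (𝓝 0) :=
    tendsto_const_nhds.div_atTop hzn
  refine tendsto_of_tendsto_of_tendsto_of_le_of_le' (by simpa using hc.sub herror) hc ?_ ?_
  · filter_upwards [hz, eventually_gt_atTop 0] with n ⟨hz0, hz1⟩ hn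
    exact one_sub_pow_mul_tsum_sub_le hz0 hz1 hn m
  · filter_upwards [hz, eventually_gt_atTop 0] with n ⟨hz0, hz1⟩ hn
    exact mul_le_mul_of_nonneg_left (sawMoment_le_tsum hz0 hz1 hn m)
      (pow_nonneg (sub_nonneg.mpr hz1.le) _)

lemma tendsto_one_sub_mul_sawMoment_zero (hz01 : ∀ᶠ n in atTop, 0 ≤ z n ∧ z n < 1)
    (hzn : Tendsto (fun n => (1 - z n) ^ 2 * n) atTop atTop) :
    Tendsto (fun n => (1 - z n) ^ 1 * sawMoment 0 n (z n)) atTop (𝓝 1) := by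
  refine tendsto_one_sub_pow_mul_sawMoment 0 hz01 hzn (tendsto_const_nhds.congr' ?_)
  filter_upwards [hz01] with n ⟨hz0, hz1⟩
  simp only [pow_zero, one_mul, zero_add, pow_one, tsum_geometric_of_lt_one hz0 hz1]
  exact (mul_inv_cancel₀ (sub_pos.mpr hz1).ne').symm

lemma tendsto_one_sub_sq_mul_sawMoment_one (hz : Tendsto z atTop (𝓝 1))
    (hz01 : ∀ᶠ n in atTop, 0 ≤ z n ∧ z n < 1)
    (hzn : Tendsto (fun n => (1 - z n) ^ 2 * n) atTop atTop) :
    Tendsto (fun n => (1 - z n) ^ 2 * sawMoment 1 n (z n)) atTop (𝓝 1) := by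
  refine tendsto_one_sub_pow_mul_sawMoment 1 hz01 hzn (hz.congr' ?_)
  filter_upwards [hz01] with n ⟨hz0, hz1⟩
  have hz : ‖z n‖ < 1 := by rwa [Real.norm_of_nonneg hz0]
  simp only [pow_one, tsum_coe_mul_geometric_of_norm_lt_one hz]
  field_simp [(sub_pos.mpr hz1).ne']

lemma tendsto_one_sub_cube_mul_sawMoment_two (hz : Tendsto z atTop (𝓝 1))
    (hz01 : ∀ᶠ n in atTop, 0 ≤ z n ∧ z n < 1)
    (hzn : Tendsto (fun n => (1 - z n) ^ 2 * n) atTop atTop) :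
    Tendsto (fun n => (1 - z n) ^ 3 * sawMoment 2 n (z n)) atTop (𝓝 2) := by
  have hlim : Tendsto (fun n => z n * (1 + z n)) atTop (𝓝 2) := by
    simpa [one_add_one_eq_two] using hz.mul (hz.const_add 1)
  refine tendsto_one_sub_pow_mul_sawMoment 2 hz01 hzn (hlim.congr' ?_)
  filter_upwards [hz01] with n ⟨hz0, hz1⟩
  have hz : ‖z n‖ < 1 := by rwa [Real.norm_of_nonneg hz0]
  rw [(hasSum_sq_mul_geometric hz).tsum_eq]
  field_simp [(sub_pos.mpr hz1).ne']

lemma isEquivalent_sawMean (hz : Tendsto z atTop (𝓝 1))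
    (hz01 : ∀ᶠ n in atTop, 0 ≤ z n ∧ z n < 1)
    (hzn : Tendsto (fun n => (1 - z n) ^ 2 * n) atTop atTop) :
    (fun n => sawMean n (z n)) ~[atTop] fun n => (1 - z n)⁻¹ := by
  refine isEquivalent_of_tendsto_one ?_
  have h := (tendsto_one_sub_sq_mul_sawMoment_one hz hz01 hzn).div
    (tendsto_one_sub_mul_sawMoment_zero hz01 hzn) one_ne_zero
  rw [div_one] at h
  refine h.congr' ?_
  filter_upwards [hz01] with n ⟨_, hz1⟩
  simp only [Pi.div_apply, sawMean_eq_s15, div_inv_eq_mul]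
  field_simp [(sub_pos.mpr hz1).ne']

lemma isEquivalent_sawVar (hz : Tendsto z atTop (𝓝 1))
    (hz01 : ∀ᶠ n in atTop, 0 ≤ z n ∧ z n < 1)
    (hzn : Tendsto (fun n => (1 - z n) ^ 2 * n) atTop atTop) :
    (fun n => sawVar n (z n)) ~[atTop] fun n => ((1 - z n)⁻¹) ^ 2 := by
  refine isEquivalent_of_tendsto_one ?_
  have h0 := tendsto_one_sub_mul_sawMoment_zero hz01 hzn
  have h := ((tendsto_one_sub_cube_mul_sawMoment_two hz hz01 hzn).div h0 one_ne_zero).sub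
    (((tendsto_one_sub_sq_mul_sawMoment_one hz hz01 hzn).div h0 one_ne_zero).pow 2)
  norm_num at h
  refine h.congr' ?_
  filter_upwards [hz01] with n ⟨_, hz1⟩
  simp only [Pi.div_apply, sawVar_eq, inv_pow, div_inv_eq_mul]
  field_simp [(sub_pos.mpr hz1).ne']

end HighTemperature

lemma isEquivalent_sawMean_sawVar {u : ℕ → ℝ} (hu : Tendsto u atTop (𝓝 0))
    (hu0 : ∀ᶠ n in atTop, 0 < u n) (hun : Tendsto (fun n => u n ^ 2 * n) atTop atTop) :
    ((fun n => sawMean n (1 / (1 + u n))) ~[atTop] fun n => (u n)⁻¹)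
      ∧ ((fun n => sawVar n (1 / (1 + u n))) ~[atTop] fun n => (u n)⁻¹ ^ 2) := by
  set z : ℕ → ℝ := fun n => 1 / (1 + u n)
  have hz : Tendsto z atTop (𝓝 1) := by
    simpa [z] using (hu.const_add 1).inv₀ (by norm_num)
  have hz01 : ∀ᶠ n in atTop, 0 ≤ z n ∧ z n < 1 := by
    filter_upwards [hu0] with n hn
    exact ⟨by positivity, (div_lt_one (by positivity)).mpr (by linarith)⟩
  have hq : (fun n => 1 - z n) ~[atTop] u := by
    refine isEquivalent_of_tendsto_one (hz.congr' ?_)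
    filter_upwards [hu0] with n hn
    simp only [z, Pi.div_apply]
    field_simp
    ring
  have hzn : Tendsto (fun n => (1 - z n) ^ 2 * n) atTop atTop :=
    ((hq.pow 2).mul (IsEquivalent.refl (u := fun n : ℕ => (n : ℝ)))).symm.tendsto_atTop hun
  exact ⟨(isEquivalent_sawMean hz hz01 hzn).trans hq.inv,
    (isEquivalent_sawVar hz hz01 hzn).trans (hq.inv.pow 2)⟩

lemma tendsto_mul_rpow_neg_sq_mul_atTop {α β : ℝ} (hα : α ≠ 0) (hβ : β < 1 / 2) :
    Tendsto (fun n : ℕ => (α * (n : ℝ) ^ (-β)) ^ 2 * n) atTop atTop := by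
  refine (((tendsto_rpow_atTop (by linarith : 0 < 1 - 2 * β)).comp
    tendsto_natCast_atTop_atTop).const_mul_atTop (by positivity : 0 < α ^ 2)).congr' ?_
  filter_upwards [eventually_gt_atTop 0] with n hn
  have hn' : (0 : ℝ) < n := by exact_mod_cast hn
  simp only [Function.comp, mul_pow, ← Real.rpow_natCast, ← Real.rpow_mul hn'.le]
  rw [mul_assoc, ← Real.rpow_add_one hn'.ne']
  push_cast
  ring_nf

theorem mean_var_high_temp_window (α β : ℝ) (hα : 0 < α) (hβ1 : 0 < β) (hβ2 : β < 1 / 2) :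
    ((fun n : ℕ => sawMean n (1 / (1 + α * (n : ℝ) ^ (-β)))) ~[atTop]
        (fun n : ℕ => (n : ℝ) ^ β / α))
      ∧ ((fun n : ℕ => sawVar n (1 / (1 + α * (n : ℝ) ^ (-β)))) ~[atTop]
        (fun n : ℕ => (n : ℝ) ^ (2 * β) / α ^ 2)) := by
  have hu : Tendsto (fun n : ℕ => α * (n : ℝ) ^ (-β)) atTop (𝓝 0) := by
    simpa using ((tendsto_rpow_neg_atTop hβ1).comp tendsto_natCast_atTop_atTop).const_mul α
  have hu0 : ∀ᶠ n : ℕ in atTop, 0 < α * (n : ℝ) ^ (-β) := by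
    filter_upwards [eventually_gt_atTop 0] with n hn
    positivity
  obtain ⟨hmean, hvar⟩ := isEquivalent_sawMean_sawVar hu hu0
    (tendsto_mul_rpow_neg_sq_mul_atTop hα.ne' hβ2)
  have hinv : ∀ᶠ n : ℕ in atTop, (α * (n : ℝ) ^ (-β))⁻¹ = (n : ℝ) ^ β / α :=
    Eventually.of_forall fun n => by
      rw [Real.rpow_neg (Nat.cast_nonneg n), mul_inv, inv_inv, div_eq_inv_mul, mul_comm]
  refine ⟨hmean.congr_right hinv, hvar.congr_right ?_⟩
  filter_upwards [hinv] with n hn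
  rw [hn, div_pow, ← Real.rpow_natCast, ← Real.rpow_mul (Nat.cast_nonneg n)]
  push_cast
  ring_nf
end
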